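/- arXiv:1912.12224 — 11 statements merged into one kernel-verified Lean document; each statement's English description precedes it below -/
import Mathlib

section
/- The system (D,H) is s-sparse-controllable if and only if for every λ ∈ ℂ the N×(N+L) complex block matrix [λI − D | H] has rank N and, in addition, N ≤ s + rank(D). -/
open Matrix

/-- `h` is `s`-sparse: at most `s` nonzero entries. -/
def IsSparse {L : ℕ} (s : ℕ) (h : Fin L → ℝ) : Prop :=
  {i : Fin L | h i ≠ 0}.ncard ≤ s

/-- Inputs `h 0, …, h (K-1)` steer the state `xinit` to `xfinal`:
`xfinal − D^K xinit = ∑_{k=1}^{K} D^{K−k} H h_k`. -/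
def Steers {N L : ℕ} (D : Matrix (Fin N) (Fin N) ℝ) (H : Matrix (Fin N) (Fin L) ℝ)
    (K : ℕ) (h : Fin K → Fin L → ℝ) (xinit xfinal : Fin N → ℝ) : Prop :=
  xfinal - (D ^ K) *ᵥ xinit = ∑ k : Fin K, (D ^ (K - 1 - (k : ℕ))) *ᵥ (H *ᵥ h k)

/-- The system `(D, H)` is `s`-sparse-controllable. -/
def SparseControllable (N L s : ℕ) (D : Matrix (Fin N) (Fin N) ℝ)
    (H : Matrix (Fin N) (Fin L) ℝ) : Prop :=
  ∀ xinit xfinal : Fin N → ℝ, ∃ K : ℕ, 0 < K ∧ ∃ h : Fin K → Fin L → ℝ,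
    (∀ k, IsSparse s (h k)) ∧ Steers D H K h xinit xfinal

/-- PBH block matrix `[λ I − D | H]` over `ℂ` (entrywise complexification). -/
noncomputable def pbhMatrix {N L : ℕ} (D : Matrix (Fin N) (Fin N) ℝ)
    (H : Matrix (Fin N) (Fin L) ℝ) (lam : ℂ) : Matrix (Fin N) (Fin N ⊕ Fin L) ℂ :=
  Matrix.fromCols (lam • (1 : Matrix (Fin N) (Fin N) ℂ) - D.map Complex.ofReal)
    (H.map Complex.ofReal)

/-!
With the supports of the inputs fixed, the states reachable from `0` form a subspace, so the
question is which sums `∑ₖ Dᵏ · span (columns of H in Sₖ)`, `|Sₖ| ≤ s`, exhaust `ℝᴺ`.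

Necessity. A left eigenvector `z` of `D` with `z H = 0` annihilates every reachable state.
Writing a reachable state as `D y + H g` with `g` `s`-sparse covers `ℝᴺ` by the finitely many
subspaces `span (columns in T) + range D`, `|T| ≤ s`; over an infinite field one of them is
everything, whence `N ≤ s + rank D`.

Sufficiency. If the Kalman space `∑ⱼ Dʲ (range H)` were proper, the (complexified) left
annihilator would be a nonzero `Dᵀ`-invariant space, containing a left eigenvector that violates
the rank condition. So `range H + range D = ℝᴺ`, and at most `N - rank D ≤ s` columns `T` already
satisfy `span H_T + range D = ℝᴺ`; iterating, `ℝᴺ = ∑_{i<n} Dⁱ span H_T + range Dⁿ`. For `n` large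
(Fitting) `D` is injective on `range Dⁿ`, so `D` maps each `D`-invariant subspace of `range Dⁿ`
onto itself. `range Dⁿ` is the sum of the invariant spaces `Dⁿ (Krylov space of a column)`, each
reachable with `1`-sparse inputs, and invariance lets them be steered one after the other.
-/

open Submodule Module

theorem Matrix.rank_eq_card_iff_vecMul_eq_zero {K m n : Type*} [Field K] [Fintype m] [Fintype n]
    (M : Matrix m n K) : M.rank = Fintype.card m ↔ ∀ z, z ᵥ* M = 0 → z = 0 := by
  rw [rank_eq_finrank_span_row, ← Set.finrank, eq_comm,
    ← linearIndependent_iff_card_eq_finrank_span, ← vecMul_injective_iff, ← coe_vecMulLinear,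
    injective_iff_map_eq_zero]
  rfl

theorem Matrix.exists_left_eigenvector_vecMul_eq_zero {K n m : Type*} [Field K] [IsAlgClosed K]
    [Fintype n] [DecidableEq n] (A : Matrix n n K) (B : Matrix n m K) {z : n → K} (hz : z ≠ 0)
    (h : ∀ j : ℕ, z ᵥ* (A ^ j * B) = 0) :
    ∃ (μ : K) (w : n → K), w ≠ 0 ∧ w ᵥ* A = μ • w ∧ w ᵥ* B = 0 := by
  let W : Submodule K (n → K) := ⨅ j : ℕ, LinearMap.ker (A ^ j * B).vecMulLinear
  have hmem : ∀ w, w ∈ W ↔ ∀ j : ℕ, w ᵥ* (A ^ j * B) = 0 := by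
    simp [W, Submodule.mem_iInf]
  have hinv : ∀ w ∈ W, A.vecMulLinear w ∈ W := fun w hw => by
    simp only [hmem, vecMulLinear_apply, vecMul_vecMul] at hw ⊢
    intro j
    rw [← Matrix.mul_assoc, ← pow_succ']
    exact hw (j + 1)
  have : Nontrivial W := (Submodule.nontrivial_iff_ne_bot).mpr
    ((Submodule.ne_bot_iff W).mpr ⟨z, (hmem z).mpr h, hz⟩)
  obtain ⟨μ, hμ⟩ := Module.End.exists_eigenvalue (A.vecMulLinear.restrict hinv)
  obtain ⟨w, hw⟩ := hμ.exists_hasEigenvector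
  refine ⟨μ, w, fun h0 => hw.2 (Subtype.ext h0), congrArg Subtype.val hw.apply_eq_smul, ?_⟩
  simpa using (hmem w).mp w.2 0

theorem Matrix.map_ofReal_mulVec {m n : Type*} [Fintype n] (A : Matrix m n ℝ) (v : n → ℝ) :
    A.map Complex.ofReal *ᵥ (Complex.ofReal ∘ v) = Complex.ofReal ∘ (A *ᵥ v) :=
  funext fun i => (RingHom.map_mulVec Complex.ofRealHom A v i).symm

theorem Matrix.vecMul_map_ofReal {m n : Type*} [Fintype m] (A : Matrix m n ℝ) (v : m → ℝ) :
    (Complex.ofReal ∘ v) ᵥ* A.map Complex.ofReal = Complex.ofReal ∘ (v ᵥ* A) :=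
  funext fun i => (RingHom.map_vecMul Complex.ofRealHom A v i).symm

theorem Submodule.exists_dotProduct_eq_zero_of_ne_top {K n : Type*} [Field K] [Fintype n]
    [DecidableEq n] {W : Submodule K (n → K)} (hW : W ≠ ⊤) :
    ∃ z ≠ 0, ∀ x ∈ W, z ⬝ᵥ x = 0 := by
  obtain ⟨φ, hφ, hle⟩ := W.exists_le_ker_of_lt_top (lt_top_iff_ne_top.mpr hW)
  refine ⟨(dotProductEquiv K n).symm φ, by simpa using hφ, fun x hx => ?_⟩
  have := hle hx
  simp_all [← dotProductEquiv_apply_apply]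

theorem Submodule.exists_finset_card_le_finrank_quotient_sup_span_image_eq_top {K V ι : Type*}
    [Field K] [AddCommGroup V] [Module K V] [FiniteDimensional K V] [Finite ι]
    (W : Submodule K V) (v : ι → V) (h : W ⊔ span K (Set.range v) = ⊤) :
    ∃ T : Finset ι, T.card ≤ finrank K (V ⧸ W) ∧ W ⊔ span K (v '' T) = ⊤ := by
  classical
  obtain ⟨κ, a, ha, hspan, hli⟩ := exists_linearIndependent' K (W.mkQ ∘ v)
  have := Finite.of_injective a ha
  have : Fintype κ := Fintype.ofFinite κ
  refine ⟨Finset.univ.image a, ?_, ?_⟩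
  · rw [Finset.card_image_of_injective _ ha]
    exact hli.fintype_card_le_finrank
  · rw [← map_mkQ_eq_top, map_span, Finset.coe_image, Finset.coe_univ, Set.image_univ,
      ← Set.image_comp, ← Set.range_comp, hspan, Set.range_comp, ← map_span, map_mkQ_eq_top, h]

namespace Module.End

section Ring

variable {R M : Type*} [Ring R] [AddCommGroup M] [Module R M] (f : Module.End R M)

theorem biSup_map_pow_sup_range_pow_eq_top {U : Submodule R M} (h : U ⊔ LinearMap.range f = ⊤)
    (n : ℕ) : (⨆ i < n, U.map (f ^ i)) ⊔ LinearMap.range (f ^ n) = ⊤ := by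
  induction n with
  | zero => simp [one_eq_id]
  | succ n ih =>
    have hsplit : LinearMap.range (f ^ n) = U.map (f ^ n) ⊔ LinearMap.range (f ^ (n + 1)) := by
      rw [← Submodule.map_top, ← h, Submodule.map_sup, ← LinearMap.range_comp, ← mul_eq_comp,
        ← pow_succ]
    rw [Nat.iSup_lt_succ, sup_assoc, ← hsplit, ih]

theorem iSup_map_pow_le_sup_range (U : Submodule R M) :
    ⨆ j, U.map (f ^ j) ≤ U ⊔ LinearMap.range f := by
  refine iSup_le fun j => ?_
  cases j with
  | zero => simp [one_eq_id]
  | succ j =>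
    rw [pow_succ', mul_eq_comp, Submodule.map_comp]
    exact le_sup_of_le_right LinearMap.map_le_range

theorem map_iSup_map_pow_le (U : Submodule R M) :
    (⨆ j, U.map (f ^ j)).map f ≤ ⨆ j, U.map (f ^ j) := by
  rw [Submodule.map_iSup]
  refine iSup_mono' fun j => ⟨j + 1, ?_⟩
  rw [← Submodule.map_comp, ← mul_eq_comp, ← pow_succ']

theorem map_pow_eq_self {W : Submodule R M} (hW : W.map f = W) (k : ℕ) : W.map (f ^ k) = W := by
  induction k with
  | zero => simp [one_eq_id]
  | succ k ih => rw [pow_succ', mul_eq_comp, Submodule.map_comp, ih, hW]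

theorem exists_iSup_map_pow_eq_biSup_lt [IsNoetherian R M] (U : Submodule R M) :
    ∃ m, ⨆ i, U.map (f ^ i) = ⨆ i < m, U.map (f ^ i) := by
  let chain : ℕ →o Submodule R M :=
    { toFun := fun m => ⨆ i < m, U.map (f ^ i)
      monotone' := fun a b hab => biSup_mono fun i hi => lt_of_lt_of_le hi hab }
  obtain ⟨m, hm⟩ := monotone_stabilizes_iff_noetherian.mpr inferInstance chain
  refine ⟨m, le_antisymm (iSup_le fun i => ?_) ?_⟩
  · calc U.map (f ^ i) ≤ chain (max m (i + 1)) :=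
          le_biSup (fun i => U.map (f ^ i)) (show i < max m (i + 1) by omega)
      _ = chain m := (hm _ (le_max_left _ _)).symm
  · exact iSup₂_le fun i _ => le_iSup (fun i => U.map (f ^ i)) i

end Ring

theorem map_eq_self_of_le_range_pow {K V : Type*} [Field K] [AddCommGroup V] [Module K V]
    [FiniteDimensional K V] {f : Module.End K V} {n : ℕ} (hn : 0 < n)
    (hdisj : Disjoint (LinearMap.ker (f ^ n)) (LinearMap.range (f ^ n))) {W : Submodule K V}
    (hW : W ≤ LinearMap.range (f ^ n)) (hinv : W.map f ≤ W) : W.map f = W := by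
  have hker : LinearMap.ker f ≤ LinearMap.ker (f ^ n) := by
    obtain ⟨m, rfl⟩ := Nat.exists_eq_add_of_lt hn
    intro x hx
    simp_all [pow_succ, mul_apply]
  have hinj : Function.Injective (f.domRestrict W) :=
    LinearMap.injective_domRestrict_iff.mpr ((hdisj.mono_left hker).mono_right hW).symm
  refine Submodule.eq_of_le_of_finrank_eq hinv ?_
  rw [← LinearMap.range_domRestrict, LinearMap.finrank_range_of_inj hinj]

end Module.End

section SparseReachability

variable {N L : ℕ} (D : Matrix (Fin N) (Fin N) ℝ) (H : Matrix (Fin N) (Fin L) ℝ) (s : ℕ)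

theorem vecMul_pbhMatrix_eq_zero_iff (lam : ℂ) (z : Fin N → ℂ) :
    z ᵥ* pbhMatrix D H lam = 0 ↔
      z ᵥ* D.map Complex.ofReal = lam • z ∧ z ᵥ* H.map Complex.ofReal = 0 := by
  rw [pbhMatrix, vecMul_fromCols, vecMul_sub, vecMul_smul, vecMul_one, ← Sum.elim_zero_zero]
  constructor
  · intro h
    exact ⟨(sub_eq_zero.mp (funext fun i => congrFun h (Sum.inl i))).symm,
      funext fun i => congrFun h (Sum.inr i)⟩
  · rintro ⟨h1, h2⟩
    rw [h1, h2, sub_self]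

def reachableSet (K : ℕ) : Set (Fin N → ℝ) :=
  {x | ∃ h : Fin K → Fin L → ℝ, (∀ k, IsSparse s (h k)) ∧ Steers D H K h 0 x}

theorem steers_iff_steers_zero {K : ℕ} (h : Fin K → Fin L → ℝ) (xinit xfinal : Fin N → ℝ) :
    Steers D H K h xinit xfinal ↔ Steers D H K h 0 (xfinal - D ^ K *ᵥ xinit) := by
  simp [Steers]

theorem isSparse_zero : IsSparse s (0 : Fin L → ℝ) := by
  simp [IsSparse]

theorem reachableSet_zero : reachableSet D H s 0 = {0} := by
  ext x
  simp [reachableSet, Steers]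

theorem mem_reachableSet_succ_iff {K : ℕ} {x : Fin N → ℝ} :
    x ∈ reachableSet D H s (K + 1) ↔
      ∃ y ∈ reachableSet D H s K, ∃ g, IsSparse s g ∧ x = D *ᵥ y + H *ᵥ g := by
  have hsum : ∀ h : Fin (K + 1) → Fin L → ℝ,
      ∑ k : Fin (K + 1), D ^ (K + 1 - 1 - k) *ᵥ H *ᵥ h k =
        D *ᵥ ∑ k : Fin K, D ^ (K - 1 - k) *ᵥ H *ᵥ h k.castSucc + H *ᵥ h (Fin.last K) := by
    intro h
    rw [Fin.sum_univ_castSucc, mulVec_sum]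
    congr 1
    · refine Finset.sum_congr rfl fun k _ => ?_
      have hexp : K + 1 - 1 - (k.castSucc : ℕ) = K - 1 - k + 1 := by
        simp only [Fin.val_castSucc]
        omega
      rw [hexp, pow_succ', ← mulVec_mulVec]
    · simp
  simp only [reachableSet, Steers, mulVec_zero, sub_zero, Set.mem_ofPred_eq, hsum]
  constructor
  · rintro ⟨h, hsp, rfl⟩
    exact ⟨_, ⟨fun k => h k.castSucc, fun k => hsp _, rfl⟩, h (Fin.last K), hsp _, rfl⟩
  · rintro ⟨_, ⟨h, hsp, rfl⟩, g, hg, rfl⟩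
    refine ⟨Fin.snoc h g, Fin.lastCases ?_ fun k => ?_, ?_⟩ <;> simp [hsp, hg]

theorem zero_mem_reachableSet (K : ℕ) : 0 ∈ reachableSet D H s K := by
  induction K with
  | zero => simp [reachableSet_zero]
  | succ K ih =>
    exact (mem_reachableSet_succ_iff D H s).mpr ⟨0, ih, 0, isSparse_zero s, by simp⟩

theorem pow_mulVec_add_mem_reachableSet {K M : ℕ} {x y : Fin N → ℝ}
    (hx : x ∈ reachableSet D H s K) (hy : y ∈ reachableSet D H s M) :
    D ^ M *ᵥ x + y ∈ reachableSet D H s (K + M) := by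
  induction M generalizing y with
  | zero =>
    rw [reachableSet_zero, Set.mem_singleton_iff] at hy
    simpa [hy] using hx
  | succ M ih =>
    obtain ⟨y', hy', g, hg, rfl⟩ := (mem_reachableSet_succ_iff D H s).mp hy
    refine (mem_reachableSet_succ_iff D H s).mpr ⟨_, ih hy', g, hg, ?_⟩
    rw [mulVec_add, mulVec_mulVec, ← pow_succ', add_assoc]

theorem mulVec_mem_reachableSet_one {g : Fin L → ℝ} (hg : IsSparse s g) :
    H *ᵥ g ∈ reachableSet D H s 1 :=
  (mem_reachableSet_succ_iff D H s).mpr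
    ⟨0, zero_mem_reachableSet D H s 0, g, hg, by simp⟩

theorem map_pow_sup_subset_reachableSet {K₁ K₂ : ℕ} {W₁ W₂ : Submodule ℝ (Fin N → ℝ)}
    (h₁ : ↑W₁ ⊆ reachableSet D H s K₁) (h₂ : ↑W₂ ⊆ reachableSet D H s K₂) :
    ↑(W₁.map (toLin' D ^ K₂) ⊔ W₂) ⊆ reachableSet D H s (K₁ + K₂) := by
  intro x hx
  obtain ⟨_, ⟨w, hw, rfl⟩, y, hy, rfl⟩ := Submodule.mem_sup.mp hx
  rw [← toLin'_pow, toLin'_apply]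
  exact pow_mulVec_add_mem_reachableSet D H s (h₁ hw) (h₂ hy)

theorem map_pow_subset_reachableSet {K M : ℕ} {W : Submodule ℝ (Fin N → ℝ)}
    (hW : ↑W ⊆ reachableSet D H s K) :
    ↑(W.map (toLin' D ^ M)) ⊆ reachableSet D H s (K + M) := by
  have hbot : ↑(⊥ : Submodule ℝ (Fin N → ℝ)) ⊆ reachableSet D H s M := by
    simpa using zero_mem_reachableSet D H s M
  simpa using map_pow_sup_subset_reachableSet D H s hW hbot

theorem biSup_map_pow_subset_reachableSet {U : Submodule ℝ (Fin N → ℝ)}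
    (hU : ↑U ⊆ reachableSet D H s 1) (m : ℕ) :
    ↑(⨆ i < m, U.map (toLin' D ^ i)) ⊆ reachableSet D H s m := by
  induction m with
  | zero => simp [zero_mem_reachableSet]
  | succ m ih =>
    have hsplit : ⨆ i < m + 1, U.map (toLin' D ^ i) =
        (⨆ i < m, U.map (toLin' D ^ i)).map (toLin' D ^ 1) ⊔ U := by
      rw [Nat.iSup_lt_succ', sup_comm]
      simp only [Submodule.map_iSup, ← Submodule.map_comp, ← Module.End.mul_eq_comp, pow_one,
        ← pow_succ', pow_zero, Module.End.one_eq_id, Submodule.map_id]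
    rw [hsplit]
    exact map_pow_sup_subset_reachableSet D H s ih hU

theorem span_col_image_subset_reachableSet {T : Finset (Fin L)} (hT : T.card ≤ s) :
    ↑(span ℝ (H.col '' T)) ⊆ reachableSet D H s 1 := by
  have hle : span ℝ (H.col '' T) ≤ (Submodule.pi (↑T)ᶜ fun _ => ⊥).map (toLin' H) := by
    rw [span_le]
    rintro _ ⟨t, ht, rfl⟩
    refine ⟨Pi.single t 1, (Submodule.mem_pi).mpr fun l hl => ?_, by simp⟩
    have : l ≠ t := fun h => hl (h ▸ ht)
    simp [this]
  intro x hx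
  obtain ⟨g, hg, rfl⟩ := hle hx
  refine mulVec_mem_reachableSet_one D H s (le_trans ?_ hT)
  rw [← Set.ncard_coe_finset]
  refine Set.ncard_le_ncard (fun l hl => ?_) T.finite_toSet
  by_contra hlT
  exact hl ((Submodule.mem_pi).mp hg l hlT)

theorem exists_iSup_subset_reachableSet {ι : Type*} [Finite ι] (C : ι → Submodule ℝ (Fin N → ℝ))
    (hinv : ∀ t, (C t).map (toLin' D) = C t)
    (hreach : ∀ t, ∃ K, ↑(C t) ⊆ reachableSet D H s K) :
    ∃ K, ↑(⨆ t, C t) ⊆ reachableSet D H s K := by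
  classical
  have := Fintype.ofFinite ι
  suffices ∀ F : Finset ι, ∃ K, ↑(F.sup C) ⊆ reachableSet D H s K by
    simpa [Finset.sup_univ_eq_iSup] using this Finset.univ
  intro F
  induction F using Finset.induction_on with
  | empty => exact ⟨0, by simp [reachableSet_zero]⟩
  | insert a F _ ih =>
    obtain ⟨K, hK⟩ := ih
    obtain ⟨Ka, hKa⟩ := hreach a
    refine ⟨Ka + K, ?_⟩
    rw [Finset.sup_insert, ← Module.End.map_pow_eq_self _ (hinv a) K]
    exact map_pow_sup_subset_reachableSet D H s hKa hK

theorem SparseControllable.exists_mem_reachableSet (hc : SparseControllable N L s D H)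
    (x : Fin N → ℝ) : ∃ K, x ∈ reachableSet D H s K := by
  obtain ⟨K, -, h, hsp, hst⟩ := hc 0 x
  exact ⟨K, h, hsp, hst⟩

theorem mulVec_mem_span_col_image_support (g : Fin L → ℝ) :
    H *ᵥ g ∈ span ℝ (H.col '' ↑(Finset.univ.filter (g · ≠ 0))) := by
  rw [mulVec_eq_sum]
  refine sum_mem fun l _ => ?_
  rw [op_smul_eq_smul]
  by_cases hl : g l = 0
  · simp [hl]
  · exact smul_mem _ (g l) (subset_span (Set.mem_image_of_mem _ (by simpa using hl)))

theorem exists_mem_span_col_image_sup_range_of_mem_reachableSet {K : ℕ} {x : Fin N → ℝ}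
    (hx : x ∈ reachableSet D H s K) :
    ∃ T : Finset (Fin L), T.card ≤ s ∧ x ∈ span ℝ (H.col '' T) ⊔ LinearMap.range (toLin' D) := by
  cases K with
  | zero =>
    rw [reachableSet_zero, Set.mem_singleton_iff] at hx
    exact ⟨∅, by simp, hx ▸ zero_mem _⟩
  | succ K =>
    obtain ⟨y, -, g, hg, rfl⟩ := (mem_reachableSet_succ_iff D H s).mp hx
    refine ⟨Finset.univ.filter (g · ≠ 0), ?_, add_mem ?_ ?_⟩
    · simpa [IsSparse, ← Set.ncard_coe_finset] using hg
    · exact mem_sup_right ⟨y, toLin'_apply D y⟩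
    · exact mem_sup_left (mulVec_mem_span_col_image_support H g)

theorem le_add_rank_of_forall_exists_mem_reachableSet
    (h : ∀ x, ∃ K, x ∈ reachableSet D H s K) : N ≤ s + D.rank := by
  let P : {T : Finset (Fin L) // T.card ≤ s} → Submodule ℝ (Fin N → ℝ) :=
    fun T => span ℝ (H.col '' T) ⊔ LinearMap.range (toLin' D)
  have hcover : ⋃ T, (P T : Set (Fin N → ℝ)) = Set.univ := by
    refine Set.eq_univ_of_forall fun x => ?_
    obtain ⟨K, hK⟩ := h x
    obtain ⟨T, hT, hxT⟩ := exists_mem_span_col_image_sup_range_of_mem_reachableSet D H s hK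
    exact Set.mem_iUnion.mpr ⟨⟨T, hT⟩, hxT⟩
  obtain ⟨⟨T, hT⟩, htop⟩ := Subspace.exists_eq_top_of_iUnion_eq_univ hcover
  have hspan : finrank ℝ (span ℝ (H.col '' T)) ≤ T.card := by
    rw [← Finset.coe_image]
    exact (finrank_span_finset_le_card _).trans Finset.card_image_le
  calc N = finrank ℝ (P ⟨T, hT⟩) := by rw [htop, finrank_top, Module.finrank_fin_fun]
    _ ≤ finrank ℝ (span ℝ (H.col '' T)) + D.rank := finrank_add_le_finrank_add_finrank _ _
    _ ≤ s + D.rank := by omega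

theorem pbhMatrix_rank_of_forall_exists_mem_reachableSet
    (h : ∀ x, ∃ K, x ∈ reachableSet D H s K) (lam : ℂ) : (pbhMatrix D H lam).rank = N := by
  suffices (pbhMatrix D H lam).rank = Fintype.card (Fin N) by simpa using this
  refine (rank_eq_card_iff_vecMul_eq_zero _).mpr fun z hz => ?_
  obtain ⟨hzD, hzH⟩ := (vecMul_pbhMatrix_eq_zero_iff D H lam z).mp hz
  have horth : ∀ K, ∀ x ∈ reachableSet D H s K, z ⬝ᵥ (Complex.ofReal ∘ x) = 0 := by
    intro K
    induction K with
    | zero => simp [reachableSet_zero]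
    | succ K ih =>
      intro x hx
      obtain ⟨y, hy, g, -, rfl⟩ := (mem_reachableSet_succ_iff D H s).mp hx
      have hcomp : Complex.ofReal ∘ (D *ᵥ y + H *ᵥ g) =
          Complex.ofReal ∘ (D *ᵥ y) + Complex.ofReal ∘ (H *ᵥ g) :=
        funext fun i => Complex.ofReal_add _ _
      rw [hcomp, ← map_ofReal_mulVec, ← map_ofReal_mulVec, dotProduct_add, dotProduct_mulVec,
        dotProduct_mulVec, hzD, hzH, smul_dotProduct, ih y hy]
      simp
  funext i
  obtain ⟨K, hK⟩ := h (Pi.single i 1)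
  simpa [Function.comp_def, Pi.single_apply, dotProduct, apply_ite] using horth K _ hK

theorem iSup_map_pow_range_eq_top_of_pbhMatrix_rank
    (hpbh : ∀ lam : ℂ, (pbhMatrix D H lam).rank = N) :
    ⨆ j : ℕ, (LinearMap.range (toLin' H)).map (toLin' D ^ j) = ⊤ := by
  by_contra hne
  obtain ⟨z, hz0, hz⟩ := Submodule.exists_dotProduct_eq_zero_of_ne_top hne
  have hzj : ∀ j : ℕ, z ᵥ* (D ^ j * H) = 0 := fun j => dotProduct_eq_zero_iff.mp fun w => by
    rw [← dotProduct_mulVec, ← mulVec_mulVec]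
    refine hz _ (mem_iSup_of_mem j ?_)
    rw [← toLin'_apply, ← toLin'_apply, toLin'_pow]
    exact mem_map_of_mem (LinearMap.mem_range_self _ w)
  have hzc : Complex.ofReal ∘ z ≠ 0 := fun h => hz0 (funext fun i => by simpa using congrFun h i)
  obtain ⟨μ, w, hw0, hwD, hwH⟩ :=
    (D.map Complex.ofReal).exists_left_eigenvector_vecMul_eq_zero (H.map Complex.ofReal) hzc
      fun j => by
        have hmap : (D ^ j * H).map Complex.ofReal =
            D.map Complex.ofReal ^ j * H.map Complex.ofReal := by
          change (D ^ j * H).map Complex.ofRealHom =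
            D.map Complex.ofRealHom ^ j * H.map Complex.ofRealHom
          rw [Matrix.map_mul, Matrix.map_pow]
        rw [← hmap, vecMul_map_ofReal, hzj j]
        rfl
  refine hw0 ((rank_eq_card_iff_vecMul_eq_zero _).mp ?_ w
    ((vecMul_pbhMatrix_eq_zero_iff D H μ w).mpr ⟨hwD, hwH⟩))
  simpa using hpbh μ

theorem exists_range_pow_subset_reachableSet (hs : 0 < s)
    (hKal : ⨆ j : ℕ, (LinearMap.range (toLin' H)).map (toLin' D ^ j) = ⊤) {n : ℕ} (hn : 0 < n)
    (hdisj : Disjoint (LinearMap.ker (toLin' D ^ n)) (LinearMap.range (toLin' D ^ n))) :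
    ∃ M, ↑(LinearMap.range (toLin' D ^ n)) ⊆ reachableSet D H s M := by
  set f := toLin' D
  let C : Fin L → Submodule ℝ (Fin N → ℝ) :=
    fun t => (⨆ j, (span ℝ {H.col t}).map (f ^ j)).map (f ^ n)
  have hE : LinearMap.range (f ^ n) = ⨆ t, C t := by
    rw [← Submodule.map_top, ← hKal, toLin'_apply', range_mulVecLin, span_range_eq_iSup]
    simp only [C, Submodule.map_iSup]
    exact iSup_comm
  rw [hE]
  refine exists_iSup_subset_reachableSet D H s C (fun t => ?_) (fun t => ?_)
  · refine Module.End.map_eq_self_of_le_range_pow hn hdisj LinearMap.map_le_range ?_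
    simp only [C]
    rw [← Submodule.map_comp, ← Module.End.mul_eq_comp, ← pow_succ', pow_succ,
      Module.End.mul_eq_comp, Submodule.map_comp]
    exact Submodule.map_mono (Module.End.map_iSup_map_pow_le f _)
  · obtain ⟨m, hm⟩ := Module.End.exists_iSup_map_pow_eq_biSup_lt f (span ℝ {H.col t})
    have hcol : ↑(span ℝ {H.col t}) ⊆ reachableSet D H s 1 := by
      simpa using
        span_col_image_subset_reachableSet D H s (T := {t}) (by rwa [Finset.card_singleton])
    exact ⟨m + n, by
      simpa only [C, hm] using map_pow_subset_reachableSet D H s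
        (biSup_map_pow_subset_reachableSet D H s hcol m)⟩

theorem exists_reachableSet_eq_univ (hs : 0 < s)
    (hpbh : ∀ lam : ℂ, (pbhMatrix D H lam).rank = N) (hrank : N ≤ s + D.rank) :
    ∃ K, 0 < K ∧ reachableSet D H s K = Set.univ := by
  set f := toLin' D
  have hKal := iSup_map_pow_range_eq_top_of_pbhMatrix_rank D H hpbh
  obtain ⟨T, hTcard, hT⟩ :=
    (LinearMap.range f).exists_finset_card_le_finrank_quotient_sup_span_image_eq_top H.col (by
      rw [← range_mulVecLin, ← toLin'_apply', eq_top_iff, ← hKal, sup_comm]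
      exact Module.End.iSup_map_pow_le_sup_range f _)
  have hTs : T.card ≤ s := by
    have := (LinearMap.range f).finrank_quotient_add_finrank
    have hr : D.rank = finrank ℝ (LinearMap.range f) := rfl
    simp only [Module.finrank_fin_fun] at this
    omega
  obtain ⟨n, hdisj, hn⟩ := ((Module.End.eventually_disjoint_ker_pow_range_pow f).and
    (Filter.eventually_gt_atTop 0)).exists
  obtain ⟨M, hM⟩ := exists_range_pow_subset_reachableSet D H s hs hKal hn hdisj
  have hU := biSup_map_pow_subset_reachableSet D H s
    (span_col_image_subset_reachableSet D H s hTs) n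
  have hEinv : (LinearMap.range (f ^ n)).map f = LinearMap.range (f ^ n) := by
    refine Module.End.map_eq_self_of_le_range_pow hn hdisj le_rfl ?_
    rw [← LinearMap.range_comp, ← Module.End.mul_eq_comp, ← pow_succ', pow_succ]
    exact LinearMap.range_comp_le_range _ _
  have htop := Module.End.biSup_map_pow_sup_range_pow_eq_top f (by rwa [sup_comm]) n
  rw [← Module.End.map_pow_eq_self f hEinv n, sup_comm] at htop
  refine ⟨M + n, by omega, Set.eq_univ_of_forall fun x => ?_⟩
  exact map_pow_sup_subset_reachableSet D H s hM hU (htop ▸ mem_top)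

end SparseReachability

theorem sparse_controllable_iff_pbh_general (N L s : ℕ) (hs : 0 < s)
    (D : Matrix (Fin N) (Fin N) ℝ) (H : Matrix (Fin N) (Fin L) ℝ) :
    SparseControllable N L s D H ↔
      ((∀ lam : ℂ, (pbhMatrix D H lam).rank = N) ∧ N ≤ s + D.rank) := by
  constructor
  · intro hc
    have hreach := hc.exists_mem_reachableSet
    exact ⟨pbhMatrix_rank_of_forall_exists_mem_reachableSet D H s hreach,
      le_add_rank_of_forall_exists_mem_reachableSet D H s hreach⟩
  · rintro ⟨hpbh, hrank⟩ xinit xfinal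
    obtain ⟨K, hK, huniv⟩ := exists_reachableSet_eq_univ D H s hs hpbh hrank
    obtain ⟨h, hsp, hst⟩ : xfinal - D ^ K *ᵥ xinit ∈ reachableSet D H s K :=
      huniv ▸ Set.mem_univ _
    exact ⟨K, hK, h, hsp, (steers_iff_steers_zero D H h xinit xfinal).mpr hst⟩

/-- The system `(D,H)` is `s`-sparse-controllable iff for every `λ ∈ ℂ` the matrix
`[λI − D | H]` has rank `N` and `N ≤ s + rank D`. -/
theorem sparse_controllable_iff_pbh (N L s : ℕ) (hN : 0 < N) (hL : 0 < L)
    (hs : 0 < s) (hsL : s ≤ L)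
    (D : Matrix (Fin N) (Fin N) ℝ) (H : Matrix (Fin N) (Fin L) ℝ) :
    SparseControllable N L s D H ↔
      ((∀ lam : ℂ, (pbhMatrix D H lam).rank = N) ∧ N ≤ s + D.rank) :=
  sparse_controllable_iff_pbh_general N L s hs D H
end

section
/- The system (D,H) is s-sparse-controllable if and only if there exist a positive integer K and index sets S_1,…,S_K ⊆ {1,…,L}, each of cardinality s, such that the N×(Ks) real matrix [D^{K−1}H_{S_1} | D^{K−2}H_{S_2} | … | D H_{S_{K−1}} | H_{S_K}] has rank N (the Kalman-type rank test). -/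
open Matrix

/-- Key computation: multiplying the block matrix by the vector of grouped inputs
gives the usual sum of reachability terms, provided each `h k` is supported on `S k`. -/
lemma blockMulVec {N L : ℕ} (D : Matrix (Fin N) (Fin N) ℝ) (H : Matrix (Fin N) (Fin L) ℝ)
    {K : ℕ} (S : Fin K → Finset (Fin L)) (h : Fin K → Fin L → ℝ)
    (hsupp : ∀ k j, j ∉ S k → h k j = 0) :
    (Matrix.of fun (i : Fin N) (p : (k : Fin K) × {j : Fin L // j ∈ S k}) =>
        ((D ^ (K - 1 - (p.1 : ℕ))) * H) i p.2.1) *ᵥ (fun p => h p.1 p.2.1)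
      = ∑ k : Fin K, (D ^ (K - 1 - (k : ℕ))) *ᵥ (H *ᵥ h k) := by
  funext i
  have hR : ∀ k : Fin K, ((D ^ (K - 1 - (k : ℕ))) *ᵥ (H *ᵥ h k)) i
      = ∑ j : {j : Fin L // j ∈ S k}, ((D ^ (K - 1 - (k : ℕ))) * H) i j.1 * h k j.1 := by
    intro k
    rw [mulVec_mulVec]
    have h1 : (((D ^ (K - 1 - (k : ℕ))) * H) *ᵥ h k) i
        = ∑ j : Fin L, ((D ^ (K - 1 - (k : ℕ))) * H) i j * h k j := by
      simp [Matrix.mulVec, dotProduct]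
    rw [h1, Finset.sum_coe_sort (S k)
      (fun j => ((D ^ (K - 1 - (k : ℕ))) * H) i j * h k j)]
    exact (Finset.sum_subset (Finset.subset_univ (S k))
      (fun j _ hj => by rw [hsupp k j hj, mul_zero])).symm
  have hL : ((Matrix.of fun (i : Fin N) (p : (k : Fin K) × {j : Fin L // j ∈ S k}) =>
        ((D ^ (K - 1 - (p.1 : ℕ))) * H) i p.2.1) *ᵥ (fun p => h p.1 p.2.1)) i
      = ∑ p : (k : Fin K) × {j : Fin L // j ∈ S k},
          ((D ^ (K - 1 - (p.1 : ℕ))) * H) i p.2.1 * h p.1 p.2.1 := by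
    simp [Matrix.mulVec, dotProduct]
  rw [hL, ← Finset.univ_sigma_univ, Finset.sum_sigma, Finset.sum_apply]
  exact Finset.sum_congr rfl fun k _ => (hR k).symm

/-- Kalman-type rank test: `(D,H)` is `s`-sparse-controllable iff for some finite `K`
there are index sets `S_1, …, S_K`, each of cardinality `s`, such that the matrix
`[D^{K−1}H_{S_1} | D^{K−2}H_{S_2} | … | H_{S_K}]` has rank `N`. -/
theorem sparse_controllable_iff_kalman (N L s : ℕ) (hN : 0 < N) (hL : 0 < L)
    (hs : 0 < s) (hsL : s ≤ L)
    (D : Matrix (Fin N) (Fin N) ℝ) (H : Matrix (Fin N) (Fin L) ℝ) :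
    SparseControllable N L s D H ↔
      ∃ (K : ℕ), 0 < K ∧ ∃ S : Fin K → Finset (Fin L),
        (∀ k, (S k).card = s) ∧
        (Matrix.of fun (i : Fin N) (p : (k : Fin K) × {j : Fin L // j ∈ S k}) =>
            ((D ^ (K - 1 - (p.1 : ℕ))) * H) i p.2.1).rank = N := by
  classical
  have hfinrank : Module.finrank ℝ (Fin N → ℝ) = N := by
    simp [Module.finrank_pi]
  constructor
  · -- forward direction
    intro hctrl
    by_contra hno
    push_neg at hno
    -- the countable family of candidate subspaces
    have hclosed : ∀ p : (K : ℕ) × (Fin K → Finset (Fin L)),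
        IsClosed (if 0 < p.1 ∧ ∀ k, (p.2 k).card = s then
          (LinearMap.range (Matrix.of fun (i : Fin N)
              (q : (k : Fin p.1) × {j : Fin L // j ∈ p.2 k}) =>
              ((D ^ (p.1 - 1 - (q.1 : ℕ))) * H) i q.2.1).mulVecLin : Set (Fin N → ℝ))
        else (∅ : Set (Fin N → ℝ))) := by
      intro p
      by_cases hcond : 0 < p.1 ∧ ∀ k, (p.2 k).card = s
      · rw [if_pos hcond]
        exact Submodule.closed_of_finiteDimensional _
      · rw [if_neg hcond]
        exact isClosed_empty
    have hcover : (⋃ p : (K : ℕ) × (Fin K → Finset (Fin L)),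
        (if 0 < p.1 ∧ ∀ k, (p.2 k).card = s then
          (LinearMap.range (Matrix.of fun (i : Fin N)
              (q : (k : Fin p.1) × {j : Fin L // j ∈ p.2 k}) =>
              ((D ^ (p.1 - 1 - (q.1 : ℕ))) * H) i q.2.1).mulVecLin : Set (Fin N → ℝ))
        else (∅ : Set (Fin N → ℝ)))) = Set.univ := by
      rw [Set.eq_univ_iff_forall]
      intro x
      obtain ⟨K, hK, h, hsp, hst⟩ := hctrl 0 x
      rw [Steers, Matrix.mulVec_zero, sub_zero] at hst
      -- enlarge supports to sets of cardinality exactly s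
      have hT : ∀ k : Fin K, ∃ T : Finset (Fin L),
          (∀ j, j ∉ T → h k j = 0) ∧ T.card = s := by
        intro k
        have hfin : {i : Fin L | h k i ≠ 0}.Finite := Set.toFinite _
        have hcard : hfin.toFinset.card ≤ s := by
          rw [← Set.ncard_eq_toFinset_card _ hfin]; exact hsp k
        obtain ⟨u, hu1, _, hu3⟩ := Finset.exists_subsuperset_card_eq
          (Finset.subset_univ hfin.toFinset) hcard (by simpa using hsL)
        refine ⟨u, fun j hj => ?_, hu3⟩
        by_contra hne
        exact hj (hu1 (hfin.mem_toFinset.mpr hne))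
      choose T hT0 hTcard using hT
      refine Set.mem_iUnion.mpr ⟨⟨K, T⟩, ?_⟩
      dsimp only
      rw [if_pos ⟨hK, hTcard⟩]
      refine ⟨fun p => h p.1 p.2.1, ?_⟩
      rw [Matrix.mulVecLin_apply, blockMulVec D H T h (fun k j hj => hT0 k j hj)]
      exact hst.symm
    obtain ⟨p, hp⟩ := nonempty_interior_of_iUnion_of_closed hclosed hcover
    by_cases hcond : 0 < p.1 ∧ ∀ k, (p.2 k).card = s
    · rw [if_pos hcond] at hp
      have htop := Submodule.eq_top_of_nonempty_interior' _ hp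
      have : (Matrix.of fun (i : Fin N)
          (q : (k : Fin p.1) × {j : Fin L // j ∈ p.2 k}) =>
          ((D ^ (p.1 - 1 - (q.1 : ℕ))) * H) i q.2.1).rank = N := by
        rw [Matrix.rank, htop, finrank_top, hfinrank]
      exact hno p.1 hcond.1 p.2 hcond.2 this
    · rw [if_neg hcond] at hp
      simp at hp
  · -- backward direction
    rintro ⟨K, hK, S, hScard, hrank⟩
    intro xinit xfinal
    refine ⟨K, hK, ?_⟩
    set M : Matrix (Fin N) ((k : Fin K) × {j : Fin L // j ∈ S k}) ℝ :=
      Matrix.of fun (i : Fin N) (p : (k : Fin K) × {j : Fin L // j ∈ S k}) =>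
        ((D ^ (K - 1 - (p.1 : ℕ))) * H) i p.2.1 with hM
    have hrange : LinearMap.range M.mulVecLin = ⊤ := by
      apply Submodule.eq_top_of_finrank_eq
      rw [hfinrank]
      exact hrank
    obtain ⟨c, hc⟩ : ∃ c, M.mulVecLin c = xfinal - (D ^ K) *ᵥ xinit :=
      (LinearMap.range_eq_top.mp hrange) _
    have hc' : M *ᵥ c = xfinal - (D ^ K) *ᵥ xinit := by
      rw [← Matrix.mulVecLin_apply]; exact hc
    set h : Fin K → Fin L → ℝ :=
      fun k j => if hj : j ∈ S k then c ⟨k, ⟨j, hj⟩⟩ else 0 with hh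
    have hsupp : ∀ k j, j ∉ S k → h k j = 0 := by
      intro k j hj; rw [hh]; exact dif_neg hj
    refine ⟨h, fun k => ?_, ?_⟩
    · -- sparsity
      have hsub : {i : Fin L | h k i ≠ 0} ⊆ (S k : Set (Fin L)) := by
        intro j hne
        by_contra hj
        exact hne (hsupp k j hj)
      calc {i : Fin L | h k i ≠ 0}.ncard
          ≤ ((S k : Set (Fin L))).ncard :=
            Set.ncard_le_ncard hsub (S k).finite_toSet
        _ = (S k).card := Set.ncard_coe_finset _
        _ = s := hScard k
    · -- steering
      have hceq : (fun p : (k : Fin K) × {j : Fin L // j ∈ S k} => h p.1 p.2.1) = c := by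
        funext p
        rw [hh]
        simp only [dif_pos p.2.2]
      rw [Steers, ← blockMulVec D H S h hsupp, hceq]
      exact hc'.symm
end

section
/- If the system (D,H) is s-sparse-controllable, then there exists an index set S ⊆ {1,…,L} with |S| = s such that the N×(N+s) real matrix [D | H_S] has rank N; consequently s ≥ N − rank(D). -/
/-!
Every input sequence steers `0` to `x` with `x = D y + H h_K`, because all terms of the
steering sum except the last carry a positive power of `D`; as `h_K` is `s`-sparse,
`x ∈ range [D | H_S]` for some `|S| = s`. So the finitely many subspaces `range [D | H_S]`
cover `ℝ^N`, and a vector space over an infinite field is not a finite union of proper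
subspaces: one of them is everything. The rank bound is subadditivity of rank over the
column blocks.
-/

open Matrix

namespace Matrix

variable {m n n₁ n₂ R : Type*}

theorem range_mulVecLin_fromCols [CommSemiring R] [Fintype n₁] [Fintype n₂]
    (A : Matrix m n₁ R) (B : Matrix m n₂ R) :
    LinearMap.range (fromCols A B).mulVecLin
      = LinearMap.range A.mulVecLin ⊔ LinearMap.range B.mulVecLin := by
  have hcol : (fromCols A B).col = Sum.elim A.col B.col := by
    funext j; cases j <;> rfl
  simp only [range_mulVecLin, hcol, Set.Sum.elim_range, Submodule.span_union]

theorem rank_fromCols_le [Field R] [Fintype m] [Fintype n₁] [Fintype n₂]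
    (A : Matrix m n₁ R) (B : Matrix m n₂ R) :
    (fromCols A B).rank ≤ A.rank + B.rank := by
  unfold rank
  rw [range_mulVecLin_fromCols]
  exact Submodule.finrank_add_le_finrank_add_finrank _ _

theorem rank_eq_card_of_range_mulVecLin_eq_top [Field R] [Fintype m] [Fintype n]
    {A : Matrix m n R} (h : LinearMap.range A.mulVecLin = ⊤) : A.rank = Fintype.card m := by
  rw [rank, h, finrank_top, Module.finrank_fintype_fun_eq_card]

theorem pow_mulVec_mem_range_mulVecLin [CommRing R] [Fintype n] [DecidableEq n]
    (D : Matrix n n R) {k : ℕ} (hk : k ≠ 0) (v : n → R) :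
    (D ^ k) *ᵥ v ∈ LinearMap.range D.mulVecLin := by
  obtain ⟨k, rfl⟩ := Nat.exists_eq_succ_of_ne_zero hk
  rw [pow_succ', ← mulVec_mulVec]
  exact ⟨_, rfl⟩

theorem mulVec_eq_submatrix_mulVec [NonUnitalNonAssocSemiring R] [Fintype n]
    (M : Matrix m n R) {S : Finset n} {v : n → R} (hv : Function.support v ⊆ S) :
    M *ᵥ v = M.submatrix id ((↑) : S → n) *ᵥ fun j => v j := by
  ext i
  simp only [mulVec, dotProduct, submatrix_apply, id]
  rw [Finset.sum_coe_sort S (fun j => M i j * v j)]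
  refine (Finset.sum_subset (Finset.subset_univ S) fun j _ hj => ?_).symm
  rw [Function.notMem_support.mp fun hjv => hj (hv hjv), mul_zero]

end Matrix

theorem IsSparse.exists_card_eq_mulVec_mem_range {N L s : ℕ} {v : Fin L → ℝ}
    (hv : IsSparse s v) (hsL : s ≤ L) (H : Matrix (Fin N) (Fin L) ℝ) :
    ∃ S : Finset (Fin L), S.card = s ∧
      H *ᵥ v ∈ LinearMap.range (H.submatrix id ((↑) : S → Fin L)).mulVecLin := by
  classical
  have hsupp : (Finset.univ.filter fun i => v i ≠ 0).card ≤ s := by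
    simpa [IsSparse, ← Set.ncard_coe_finset] using hv
  obtain ⟨S, hsuppS, hS⟩ := Finset.exists_superset_card_eq hsupp (by simpa using hsL)
  refine ⟨S, hS, _, (H.mulVec_eq_submatrix_mulVec fun i hi => hsuppS ?_).symm⟩
  simpa using hi

theorem Steers.sub_mulVec_last_mem_range {N L K : ℕ} {D : Matrix (Fin N) (Fin N) ℝ}
    {H : Matrix (Fin N) (Fin L) ℝ} {h : Fin (K + 1) → Fin L → ℝ} {xinit xfinal : Fin N → ℝ}
    (hst : Steers D H (K + 1) h xinit xfinal) :
    xfinal - H *ᵥ h (Fin.last K) ∈ LinearMap.range D.mulVecLin := by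
  rw [Steers, Fin.sum_univ_castSucc, sub_eq_iff_eq_add] at hst
  have hlast : K + 1 - 1 - (Fin.last K : ℕ) = 0 := by simp
  rw [hlast, pow_zero, one_mulVec] at hst
  rw [hst, add_right_comm, add_sub_cancel_right]
  refine add_mem (Submodule.sum_mem _ fun k _ => D.pow_mulVec_mem_range_mulVecLin ?_ _)
    (D.pow_mulVec_mem_range_mulVecLin K.succ_ne_zero _)
  simp only [Fin.val_castSucc]
  omega

theorem SparseControllable.exists_card_eq_range_fromCols_eq_top {N L s : ℕ}
    {D : Matrix (Fin N) (Fin N) ℝ} {H : Matrix (Fin N) (Fin L) ℝ}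
    (hctrl : SparseControllable N L s D H) (hsL : s ≤ L) :
    ∃ S : Finset (Fin L), S.card = s ∧
      LinearMap.range (fromCols D (H.submatrix id ((↑) : S → Fin L))).mulVecLin = ⊤ := by
  let p : {S : Finset (Fin L) // S.card = s} → Submodule ℝ (Fin N → ℝ) := fun S =>
    LinearMap.range (fromCols D (H.submatrix id ((↑) : S.1 → Fin L))).mulVecLin
  suffices hcover : ⋃ S, (p S : Set (Fin N → ℝ)) = Set.univ by
    obtain ⟨⟨S, hS⟩, htop⟩ := Subspace.exists_eq_top_of_iUnion_eq_univ hcover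
    exact ⟨S, hS, htop⟩
  refine Set.eq_univ_of_forall fun x => Set.mem_iUnion.2 ?_
  obtain ⟨_ | K, hK, h, hsparse, hst⟩ := hctrl 0 x
  · exact absurd hK (lt_irrefl 0)
  obtain ⟨S, hS, hlast⟩ := (hsparse (Fin.last K)).exists_card_eq_mulVec_mem_range hsL H
  refine ⟨⟨S, hS⟩, ?_⟩
  simpa [p, range_mulVecLin_fromCols] using
    Submodule.add_mem_sup hst.sub_mulVec_last_mem_range hlast

theorem sparse_controllable_necessary_general (N L s : ℕ) (hsL : s ≤ L)
    (D : Matrix (Fin N) (Fin N) ℝ) (H : Matrix (Fin N) (Fin L) ℝ)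
    (hctrl : SparseControllable N L s D H) :
    (∃ S : Finset (Fin L), S.card = s ∧
      (Matrix.fromCols D (H.submatrix id (Subtype.val : {j : Fin L // j ∈ S} → Fin L))).rank
        = N) ∧
    N - D.rank ≤ s := by
  obtain ⟨S, hS, htop⟩ := hctrl.exists_card_eq_range_fromCols_eq_top hsL
  have hrank := rank_eq_card_of_range_mulVecLin_eq_top htop
  rw [Fintype.card_fin] at hrank
  refine ⟨⟨S, hS, hrank⟩, ?_⟩
  have hsplit := rank_fromCols_le D (H.submatrix id ((↑) : S → Fin L))
  have hHS := (H.submatrix id ((↑) : S → Fin L)).rank_le_card_width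
  rw [Fintype.card_coe, hS] at hHS
  omega

/-- If `(D,H)` is `s`-sparse-controllable then there is an index set `S` with `|S| = s`
such that `[D | H_S]` has rank `N`; consequently `s ≥ N − rank D`. -/
theorem sparse_controllable_necessary (N L s : ℕ) (hN : 0 < N) (hL : 0 < L)
    (hs : 0 < s) (hsL : s ≤ L)
    (D : Matrix (Fin N) (Fin N) ℝ) (H : Matrix (Fin N) (Fin L) ℝ)
    (hctrl : SparseControllable N L s D H) :
    (∃ S : Finset (Fin L), S.card = s ∧
      (Matrix.fromCols D (H.submatrix id (Subtype.val : {j : Fin L // j ∈ S} → Fin L))).rank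
        = N) ∧
    N - D.rank ≤ s :=
  sparse_controllable_necessary_general N L s hsL D H hctrl
end

section
/- If the transfer matrix D is invertible, then for every s with 1 ≤ s ≤ L the system (D,H) is s-sparse-controllable if and only if it is controllable. -/
open Matrix

/-- Controllability with unconstrained inputs (arbitrary finite column index type). -/
def Controllable (N : ℕ) {ι : Type*} [Fintype ι] (D : Matrix (Fin N) (Fin N) ℝ)
    (H : Matrix (Fin N) ι ℝ) : Prop :=
  ∀ xinit xfinal : Fin N → ℝ, ∃ K : ℕ, 0 < K ∧ ∃ h : Fin K → ι → ℝ,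
    xfinal - (D ^ K) *ᵥ xinit = ∑ k : Fin K, (D ^ (K - 1 - (k : ℕ))) *ᵥ (H *ᵥ h k)

/-! Controllability says that the Krylov subspaces `span {D^j h_i | j ∈ ℕ}` of the columns `h_i`
of `H` together span the state space. Each of them is `D`-invariant and finite-dimensional, so an
invertible `D` maps it onto itself; with Cayley–Hamilton it is therefore spanned by
`D^(t+j) h_i`, `j < N`, for every shift `t`. Driving only column `i` during the `N` time steps
`N i, …, N i + N - 1` thus reaches every state in `L N` steps with inputs that have a single
nonzero entry. -/

open Submodule

open Polynomial in
theorem Matrix.pow_mem_span_pow_of_card_le {R n : Type*} [CommRing R] [Fintype n] [DecidableEq n]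
    {N : ℕ} (hN : Fintype.card n ≤ N) (D : Matrix n n R) (p : ℕ) :
    D ^ p ∈ span R (Set.range fun j : Fin N => D ^ (j : ℕ)) := by
  nontriviality R
  rw [D.pow_eq_aeval_mod_charpoly]
  set q := X ^ p %ₘ D.charpoly
  rcases eq_or_ne q 0 with hq | hq
  · rw [hq, map_zero]
    exact zero_mem _
  have hdeg : q.natDegree < N := by
    rw [natDegree_lt_iff_degree_lt hq]
    refine (degree_modByMonic_lt _ D.charpoly_monic).trans_le ?_
    rw [D.charpoly_degree_eq_dim]
    exact_mod_cast hN
  rw [aeval_eq_sum_range' hdeg, ← Fin.sum_univ_eq_sum_range]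
  exact sum_mem fun j _ => smul_mem _ _ (subset_span ⟨j, rfl⟩)

namespace Matrix

variable {𝕜 n : Type*} [Field 𝕜] [Fintype n] [DecidableEq n]

def krylov (D : Matrix n n 𝕜) (v : n → 𝕜) : Submodule 𝕜 (n → 𝕜) :=
  span 𝕜 (Set.range fun j : ℕ => (D ^ j) *ᵥ v)

variable {D : Matrix n n 𝕜} {v : n → 𝕜}

theorem pow_mulVec_mem_krylov (p : ℕ) : D ^ p *ᵥ v ∈ D.krylov v :=
  subset_span ⟨p, rfl⟩

theorem krylov_eq_span_of_card_le {N : ℕ} (hN : Fintype.card n ≤ N) :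
    D.krylov v = span 𝕜 (Set.range fun j : Fin N => D ^ (j : ℕ) *ᵥ v) := by
  refine le_antisymm (span_le.2 ?_) (span_le.2 ?_)
  · rintro _ ⟨p, rfl⟩
    obtain ⟨c, hc⟩ :=
      (mem_span_range_iff_exists_fun 𝕜).1 (D.pow_mem_span_pow_of_card_le hN p)
    change D ^ p *ᵥ v ∈ _
    rw [← hc, sum_mulVec]
    exact sum_mem fun j _ => by
      rw [smul_mulVec]
      exact smul_mem _ _ (subset_span ⟨j, rfl⟩)
  · rintro _ ⟨j, rfl⟩
    exact pow_mulVec_mem_krylov _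

theorem map_pow_mulVecLin_krylov (hD : IsUnit D) (t : ℕ) :
    (D.krylov v).map (D ^ t).mulVecLin = D.krylov v := by
  have hinj : Function.Injective (D ^ t).mulVecLin := mulVec_injective_of_isUnit (hD.pow t)
  refine eq_of_le_of_finrank_eq ?_ (equivMapOfInjective _ hinj _).finrank_eq.symm
  rw [krylov, map_span_le]
  rintro _ ⟨j, rfl⟩
  rw [mulVecLin_apply, mulVec_mulVec, ← pow_add]
  exact pow_mulVec_mem_krylov _

theorem krylov_eq_span_pow_add (hD : IsUnit D) (t : ℕ) {N : ℕ} (hN : Fintype.card n ≤ N) :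
    D.krylov v = span 𝕜 (Set.range fun j : Fin N => D ^ (t + j) *ᵥ v) := by
  rw [← map_pow_mulVecLin_krylov hD t, krylov_eq_span_of_card_le hN, map_span,
    ← Set.range_comp]
  congr 2 with j
  simp [mulVec_mulVec, pow_add]

end Matrix

theorem Controllable.iSup_krylov_col_eq_top {N : ℕ} {ι : Type*} [Fintype ι]
    {D : Matrix (Fin N) (Fin N) ℝ} {H : Matrix (Fin N) ι ℝ} (hc : Controllable N D H) :
    ⨆ i, D.krylov (H.col i) = ⊤ := by
  classical
  refine eq_top_iff'.2 fun x => ?_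
  obtain ⟨K, -, u, hx⟩ := hc 0 x
  rw [mulVec_zero, sub_zero] at hx
  rw [hx]
  refine sum_mem fun k _ => ?_
  rw [mulVec_mulVec, ← mulVecLin_apply]
  refine (range_mulVecLin _).le.trans (span_le.2 ?_) (LinearMap.mem_range_self _ _)
  rintro _ ⟨i, rfl⟩
  rw [← mulVec_single_one, ← mulVec_mulVec, mulVec_single_one]
  exact mem_iSup_of_mem i (pow_mulVec_mem_krylov _)

-- Column `i` is driven at the times `m + N i`, `m < N`.
def blockSchedule (L N : ℕ) (p : Fin (L * N)) : Fin L :=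
  (finProdFinEquiv.symm p).1

theorem span_pow_mulVec_col_blockSchedule_eq_top {𝕜 : Type*} [Field 𝕜] {N L : ℕ}
    {D : Matrix (Fin N) (Fin N) 𝕜} {H : Matrix (Fin N) (Fin L) 𝕜} (hD : IsUnit D)
    (hH : ⨆ i, D.krylov (H.col i) = ⊤) :
    span 𝕜 (Set.range fun p : Fin (L * N) => (D ^ (p : ℕ)) *ᵥ H.col (blockSchedule L N p))
      = ⊤ := by
  rw [eq_top_iff, ← hH, iSup_le_iff]
  intro i
  rw [D.krylov_eq_span_pow_add hD (N * i) (Fintype.card_fin N).le, span_le]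
  rintro _ ⟨m, rfl⟩
  exact subset_span ⟨finProdFinEquiv (i, m), by simp [blockSchedule, add_comm]⟩

theorem isSparse_single {L s : ℕ} (hs : 1 ≤ s) (i : Fin L) (c : ℝ) :
    IsSparse s (Pi.single i c : Fin L → ℝ) :=
  (Set.ncard_le_ncard Pi.support_single_subset).trans ((Set.ncard_singleton i).trans_le hs)

theorem SparseControllable.controllable {N L s : ℕ} {D : Matrix (Fin N) (Fin N) ℝ}
    {H : Matrix (Fin N) (Fin L) ℝ} (h : SparseControllable N L s D H) : Controllable N D H :=
  fun xinit xfinal =>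
    let ⟨K, hK, u, _, hsteer⟩ := h xinit xfinal
    ⟨K, hK, u, hsteer⟩

theorem sparseControllable_of_span_eq_top {N L K s : ℕ} {D : Matrix (Fin N) (Fin N) ℝ}
    {H : Matrix (Fin N) (Fin L) ℝ} (hK : 0 < K) (hs : 1 ≤ s) (σ : Fin K → Fin L)
    (hσ : span ℝ (Set.range fun p : Fin K => (D ^ (p : ℕ)) *ᵥ H.col (σ p)) = ⊤) :
    SparseControllable N L s D H := by
  intro xinit xfinal
  obtain ⟨a, ha⟩ :=
    (mem_span_range_iff_exists_fun ℝ).1 (hσ ▸ mem_top (x := xfinal - (D ^ K) *ᵥ xinit))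
  refine ⟨K, hK, fun k => Pi.single (σ k.rev) (a k.rev), fun k => isSparse_single hs _ _, ?_⟩
  rw [Steers, ← ha, ← Equiv.sum_comp Fin.revPerm]
  refine Fintype.sum_congr _ _ fun p => ?_
  rw [Fin.revPerm_apply, Fin.val_rev, mulVec_single, op_smul_eq_smul, mulVec_smul, Nat.sub_sub,
    add_comm 1 (p : ℕ)]

/-- If `D` is invertible, then for every `1 ≤ s ≤ L` the system `(D,H)` is
`s`-sparse-controllable iff it is controllable. -/
theorem reversible_sparse_controllable_iff_controllable (N L : ℕ) (hN : 0 < N) (hL : 0 < L)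
    (D : Matrix (Fin N) (Fin N) ℝ) (hD : IsUnit D) (H : Matrix (Fin N) (Fin L) ℝ) :
    ∀ s : ℕ, 1 ≤ s → s ≤ L →
      (SparseControllable N L s D H ↔ Controllable N D H) :=
  fun _ hs _ => ⟨SparseControllable.controllable, fun hc =>
    sparseControllable_of_span_eq_top (Nat.mul_pos hL hN) hs _
      (span_pow_mulVec_col_blockSchedule_eq_top hD hc.iSup_krylov_col_eq_top)⟩
end

section
/- For every invertible matrix Ψ ∈ ℝ^{L×L}, the system (D, HΨ) is s-sparse-controllable if and only if the system (D, H) is s-sparse-controllable; that is, controllability using inputs that are s-sparse under the basis Ψ is equivalent to controllability using inputs that are s-sparse under the canonical basis. -/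
open Matrix

/-!
A vector `y` is reachable from `0` with inputs supported in `S 0, …, S (K-1)` iff it lies in
`∑ₖ D^(K-1-k) · span {columns of B indexed by S k}`. There are countably many choices of `K`
and of supports of size `≤ s`, and `ℝ^N` is not a countable union of proper subspaces (they
are Lebesgue-null), so `(D, B)` is `s`-sparse-controllable iff one of these sums is all of `ℝ^N`.

That condition passes from `B * C` to `B`. The columns of `B * C` lie in the column space of
`B`; if one summand, spanned by `≤ s` columns of `B * C`, together with the sum `X` of the
others is everything, then `ℝ^N ⧸ X` has dimension `≤ s` and is spanned by the images of the
columns of `B`, hence by `≤ s` of them. Exchanging the summands one at a time gives supports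
for `B`. For invertible `Ψ` apply this to `H * Ψ` and to `H = (H * Ψ) * Ψ⁻¹`.
-/

open Submodule Module

section Exchange

variable {K V ι : Type*} [Field K] [AddCommGroup V] [Module K V] [FiniteDimensional K V]

theorem exists_finset_card_le_finrank_span_image_eq_top {u : ι → V}
    (hu : span K (Set.range u) = ⊤) :
    ∃ T : Finset ι, T.card ≤ finrank K V ∧ span K (u '' T) = ⊤ := by
  classical
  obtain ⟨κ, a, ha, hspan, hli⟩ := exists_linearIndependent' K u
  have : Finite κ := hli.finite_of_isNoetherian
  have := Fintype.ofFinite κ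
  refine ⟨Finset.univ.image a, ?_, ?_⟩
  · rw [Finset.card_image_of_injective _ ha, Finset.card_univ]
    exact hli.fintype_card_le_finrank
  · rw [Finset.coe_image, Finset.coe_univ, Set.image_univ, ← Set.range_comp, hspan, hu]

theorem exists_finset_card_le_span_image_sup_eq_top {u : ι → V} {X Y : Submodule K V}
    (hYX : Y ⊔ X = ⊤) (hYu : Y ≤ span K (Set.range u)) :
    ∃ T : Finset ι, T.card ≤ finrank K Y ∧ span K (u '' T) ⊔ X = ⊤ := by
  have hY : Y.map X.mkQ = ⊤ := by rwa [map_mkQ_eq_top, sup_comm]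
  have hfinrank : finrank K (V ⧸ X) ≤ finrank K Y := by
    rw [← finrank_top K (V ⧸ X), ← hY]
    exact finrank_map_le _ _
  have hspan : span K (Set.range (X.mkQ ∘ u)) = ⊤ := by
    rw [Set.range_comp, ← map_span, eq_top_iff, ← hY]
    exact map_mono hYu
  obtain ⟨T, hcard, hT⟩ := exists_finset_card_le_finrank_span_image_eq_top hspan
  refine ⟨T, hcard.trans hfinrank, ?_⟩
  rwa [sup_comm, ← map_mkQ_eq_top, map_span, ← Set.image_comp]

end Exchange

theorem exists_iSup_eq_top_of_exchange {α ι : Type*} [CompleteLattice α] [Finite ι]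
    {W : ι → α} (hW : ⨆ i, W i = ⊤) (P : ι → α → Prop)
    (hP : ∀ i X, W i ⊔ X = ⊤ → ∃ w, P i w ∧ w ⊔ X = ⊤) :
    ∃ w : ι → α, (∀ i, P i (w i)) ∧ ⨆ i, w i = ⊤ := by
  classical
  have := Fintype.ofFinite ι
  suffices ∀ σ : Finset ι, ∃ w : ι → α, (∀ i ∈ σ, P i (w i)) ∧ (∀ i ∉ σ, w i = W i) ∧
      ⨆ i, w i = ⊤ by
    obtain ⟨w, hP, -, htop⟩ := this Finset.univ
    exact ⟨w, fun i => hP i (Finset.mem_univ i), htop⟩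
  intro σ
  induction σ using Finset.induction_on with
  | empty => exact ⟨W, by simp, fun _ _ => rfl, hW⟩
  | @insert j σ hj ih =>
    obtain ⟨w, hwP, hwW, hwtop⟩ := ih
    obtain ⟨v, hv, hvtop⟩ := hP j (⨆ (i) (_ : i ≠ j), w i) (by
      rwa [← hwW j hj, ← iSup_split_single])
    have hrest : ∀ i ≠ j, Function.update w j v i = w i := fun i hi =>
      Function.update_of_ne hi _ _
    refine ⟨Function.update w j v, fun i hi => ?_, fun i hi => ?_, ?_⟩
    · rcases eq_or_ne i j with rfl | hij
      · rwa [Function.update_self]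
      · rw [hrest i hij]
        exact hwP i ((Finset.mem_insert.mp hi).resolve_left hij)
    · have hij : i ≠ j := fun h => hi (h ▸ Finset.mem_insert_self _ _)
      rw [hrest i hij, hwW i fun h => hi (Finset.mem_insert_of_mem h)]
    · rw [iSup_split_single _ j, Function.update_self, ← hvtop]
      congr 1
      exact iSup_congr fun i => iSup_congr fun hi => hrest i hi

namespace Matrix

variable {m n p R : Type*}

def columnSpan [Semiring R] (B : Matrix m n R) (S : Finset n) : Submodule R (m → R) :=
  span R (B.col '' S)

theorem finrank_columnSpan_le [Field R] (B : Matrix m n R) (S : Finset n) :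
    finrank R (B.columnSpan S) ≤ S.card := by
  classical
  rw [columnSpan, ← Finset.coe_image]
  exact (finrank_span_finset_le_card _).trans Finset.card_image_le

instance [Semiring R] (B : Matrix m n R) (S : Finset n) : Module.Finite R (B.columnSpan S) :=
  Module.Finite.span_of_finite R (S.finite_toSet.image _)

variable [Fintype n]

theorem mem_columnSpan_iff [CommSemiring R] {B : Matrix m n R} {S : Finset n} {v : m → R} :
    v ∈ B.columnSpan S ↔ ∃ h : n → R, Function.support h ⊆ S ∧ B *ᵥ h = v := by
  classical
  have hmulVec : ∀ h, B *ᵥ h = ∑ j, h j • B.col j := fun h => by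
    ext; simp [mulVec, dotProduct, mul_comm]
  rw [columnSpan, mem_span_image_finset_iff_exists_fun']
  constructor
  · rintro ⟨c, rfl⟩
    refine ⟨fun j => if j ∈ S then c j else 0,
      fun j hj => of_not_not fun hjS => hj (if_neg hjS), ?_⟩
    simp [hmulVec, ite_smul]
  · rintro ⟨h, hS, rfl⟩
    refine ⟨h, ?_⟩
    rw [hmulVec, Finset.sum_subset (Finset.subset_univ S)]
    intro j _ hj
    rw [Function.notMem_support.mp fun h' => hj (hS h'), zero_smul]

theorem columnSpan_mul_le_span_col [CommSemiring R] (B : Matrix m n R) (C : Matrix n p R)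
    (S : Finset p) : (B * C).columnSpan S ≤ span R (Set.range B.col) := by
  rw [columnSpan, span_le, ← range_mulVecLin]
  rintro _ ⟨j, -, rfl⟩
  exact ⟨C.col j, by ext; simp [mulVec, mul_apply, dotProduct]⟩

variable [Field R] {V : Type*} [AddCommGroup V] [Module R V] [FiniteDimensional R V]

theorem exists_map_columnSpan_sup_eq_top_of_mul (B : Matrix m n R) (C : Matrix n p R)
    (f : (m → R) →ₗ[R] V) {S : Finset p} {X : Submodule R V}
    (hS : ((B * C).columnSpan S).map f ⊔ X = ⊤) :
    ∃ T : Finset n, T.card ≤ S.card ∧ (B.columnSpan T).map f ⊔ X = ⊤ := by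
  obtain ⟨T, hcard, hT⟩ := exists_finset_card_le_span_image_sup_eq_top (u := f ∘ B.col) hS
    (by rw [Set.range_comp, ← map_span]; exact map_mono (columnSpan_mul_le_span_col B C S))
  refine ⟨T, hcard.trans ((finrank_map_le _ _).trans (finrank_columnSpan_le _ _)), ?_⟩
  rwa [columnSpan, map_span, ← Set.image_comp]

theorem exists_iSup_map_columnSpan_eq_top_of_mul {ι : Type*} [Finite ι] (B : Matrix m n R)
    (C : Matrix n p R) (f : ι → (m → R) →ₗ[R] V) {s : ℕ} {S : ι → Finset p}
    (hS : ∀ i, (S i).card ≤ s) (htop : ⨆ i, ((B * C).columnSpan (S i)).map (f i) = ⊤) :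
    ∃ T : ι → Finset n, (∀ i, (T i).card ≤ s) ∧ ⨆ i, (B.columnSpan (T i)).map (f i) = ⊤ := by
  obtain ⟨w, hw, hwtop⟩ := exists_iSup_eq_top_of_exchange htop
    (fun i w => ∃ T : Finset n, T.card ≤ s ∧ (B.columnSpan T).map (f i) = w) fun i X hX => by
      obtain ⟨T, hcard, hT⟩ := exists_map_columnSpan_sup_eq_top_of_mul B C (f i) hX
      exact ⟨_, ⟨T, hcard.trans (hS i), rfl⟩, hT⟩
  choose T hT hTw using hw
  exact ⟨T, hT, by simpa only [hTw] using hwtop⟩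

end Matrix

open MeasureTheory in
theorem Submodule.exists_eq_top_of_iUnion_eq_univ {E ι : Type*} [NormedAddCommGroup E]
    [NormedSpace ℝ E] [FiniteDimensional ℝ E] [Countable ι] {V : ι → Submodule ℝ E}
    (hV : ⋃ i, (V i : Set E) = Set.univ) : ∃ i, V i = ⊤ := by
  by_contra! hne
  borelize E
  have hnull : Measure.addHaar (Set.univ : Set E) = 0 := by
    rw [← hV]
    exact measure_iUnion_null fun i => Measure.addHaar_submodule _ _ (hne i)
  exact (isOpen_univ.measure_ne_zero _ Set.univ_nonempty) hnull

theorem isSparse_iff_exists_finset {L s : ℕ} {h : Fin L → ℝ} :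
    IsSparse s h ↔ ∃ S : Finset (Fin L), S.card ≤ s ∧ Function.support h ⊆ S := by
  constructor
  · intro hs
    have hfin := Set.toFinite (Function.support h)
    exact ⟨hfin.toFinset, (Set.ncard_eq_toFinset_card _ hfin) ▸ hs, by simp⟩
  · rintro ⟨S, hS, hsupp⟩
    exact (Set.ncard_le_ncard hsupp S.finite_toSet).trans ((Set.ncard_coe_finset S).trans_le hS)

section Reachability

variable {N L s : ℕ} {D : Matrix (Fin N) (Fin N) ℝ} {B : Matrix (Fin N) (Fin L) ℝ}

def reachableSpan (D : Matrix (Fin N) (Fin N) ℝ) (B : Matrix (Fin N) (Fin L) ℝ) (K : ℕ)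
    (S : Fin K → Finset (Fin L)) : Submodule ℝ (Fin N → ℝ) :=
  ⨆ k : Fin K, (B.columnSpan (S k)).map (D ^ (K - 1 - (k : ℕ))).mulVecLin

theorem mem_reachableSpan_iff {K : ℕ} {S : Fin K → Finset (Fin L)} {y : Fin N → ℝ} :
    y ∈ reachableSpan D B K S ↔ ∃ h : Fin K → Fin L → ℝ, (∀ k, Function.support (h k) ⊆ S k) ∧
      ∑ k : Fin K, (D ^ (K - 1 - (k : ℕ))) *ᵥ (B *ᵥ h k) = y := by
  have hmem : ∀ k v, v ∈ (B.columnSpan (S k)).map (D ^ (K - 1 - (k : ℕ))).mulVecLin ↔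
      ∃ h : Fin L → ℝ, Function.support h ⊆ S k ∧ (D ^ (K - 1 - (k : ℕ))) *ᵥ (B *ᵥ h) = v := by
    intro k v
    simp only [mem_map, mem_columnSpan_iff, mulVecLin_apply, exists_exists_and_eq_and]
  have hsum := mem_iSup_finset_iff_exists_sum (s := Finset.univ)
    (fun k : Fin K => (B.columnSpan (S k)).map (D ^ (K - 1 - (k : ℕ))).mulVecLin) y
  simp only [Finset.mem_univ, iSup_true] at hsum
  rw [reachableSpan, hsum]
  constructor
  · rintro ⟨μ, rfl⟩
    choose h hS hμ using fun k => (hmem k _).mp (μ k).2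
    exact ⟨h, hS, Finset.sum_congr rfl fun k _ => hμ k⟩
  · rintro ⟨h, hS, rfl⟩
    exact ⟨fun k => ⟨_, (hmem k _).mpr ⟨h k, hS k, rfl⟩⟩, rfl⟩

theorem sparseControllable_iff_exists_reachableSpan_eq_top :
    SparseControllable N L s D B ↔ ∃ K, 0 < K ∧ ∃ S : Fin K → Finset (Fin L),
      (∀ k, (S k).card ≤ s) ∧ reachableSpan D B K S = ⊤ := by
  constructor
  · intro hSC
    let ι := {p : (K : ℕ) × (Fin K → Finset (Fin L)) // 0 < p.1 ∧ ∀ k, (p.2 k).card ≤ s}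
    have hcover : ⋃ p : ι, (reachableSpan D B p.1.1 p.1.2 : Set (Fin N → ℝ)) = Set.univ := by
      refine Set.eq_univ_of_forall fun y => ?_
      obtain ⟨K, hK, h, hsparse, hsteers⟩ := hSC 0 y
      choose S hS hsupp using fun k => isSparse_iff_exists_finset.mp (hsparse k)
      refine Set.mem_iUnion.mpr ⟨⟨⟨K, S⟩, hK, hS⟩, mem_reachableSpan_iff.mpr ⟨h, hsupp, ?_⟩⟩
      simpa [Steers] using hsteers.symm
    obtain ⟨⟨⟨K, S⟩, hK, hS⟩, htop⟩ := Submodule.exists_eq_top_of_iUnion_eq_univ hcover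
    exact ⟨K, hK, S, hS, htop⟩
  · rintro ⟨K, hK, S, hS, htop⟩ xinit xfinal
    obtain ⟨h, hsupp, hsum⟩ := mem_reachableSpan_iff.mp
      (htop ▸ mem_top : xfinal - (D ^ K) *ᵥ xinit ∈ reachableSpan D B K S)
    exact ⟨K, hK, h, fun k => isSparse_iff_exists_finset.mpr ⟨S k, hS k, hsupp k⟩, hsum.symm⟩

theorem SparseControllable.of_mul {M : ℕ} (C : Matrix (Fin L) (Fin M) ℝ)
    (h : SparseControllable N M s D (B * C)) : SparseControllable N L s D B := by
  rw [sparseControllable_iff_exists_reachableSpan_eq_top] at h ⊢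
  obtain ⟨K, hK, S, hS, htop⟩ := h
  obtain ⟨T, hT, hTtop⟩ := exists_iSup_map_columnSpan_eq_top_of_mul B C _ hS htop
  exact ⟨K, hK, T, hT, hTtop⟩

end Reachability

theorem sparse_controllable_basis_invariance_general (N L s : ℕ)
    (D : Matrix (Fin N) (Fin N) ℝ) (H : Matrix (Fin N) (Fin L) ℝ)
    (Ψ : Matrix (Fin L) (Fin L) ℝ) (hΨ : IsUnit Ψ) :
    SparseControllable N L s D (H * Ψ) ↔ SparseControllable N L s D H := by
  refine ⟨SparseControllable.of_mul Ψ, fun h => SparseControllable.of_mul Ψ⁻¹ ?_⟩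
  rwa [mul_nonsing_inv_cancel_right _ _ ((isUnit_iff_isUnit_det Ψ).mp hΨ)]

/-- Controllability using inputs that are `s`-sparse under an invertible basis `Ψ`
is equivalent to controllability using inputs `s`-sparse under the canonical basis. -/
theorem sparse_controllable_basis_invariance (N L s : ℕ) (hN : 0 < N) (hL : 0 < L)
    (hs : 0 < s) (hsL : s ≤ L)
    (D : Matrix (Fin N) (Fin N) ℝ) (H : Matrix (Fin N) (Fin L) ℝ)
    (Ψ : Matrix (Fin L) (Fin L) ℝ) (hΨ : IsUnit Ψ) :
    SparseControllable N L s D (H * Ψ) ↔ SparseControllable N L s D H :=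
  sparse_controllable_basis_invariance_general N L s D H Ψ hΨ
end

section
/- If the system (D,H,A) is output controllable (using unconstrained inputs), then for every λ ∈ ℂ the m×(N+L) complex block matrix A·[λI − D | H] has rank m. -/
open Matrix

/-- Output controllability with unconstrained inputs, for outputs `y_k = A x_k`. -/
def OutputControllable (N L m : ℕ) (D : Matrix (Fin N) (Fin N) ℝ)
    (H : Matrix (Fin N) (Fin L) ℝ) (A : Matrix (Fin m) (Fin N) ℝ) : Prop :=
  ∀ (x0 : Fin N → ℝ) (yfinal : Fin m → ℝ), ∃ K : ℕ, 0 < K ∧ ∃ h : Fin K → Fin L → ℝ,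
    yfinal - A *ᵥ ((D ^ K) *ᵥ x0)
      = ∑ k : Fin K, A *ᵥ ((D ^ (K - 1 - (k : ℕ))) *ᵥ (H *ᵥ h k))

/-- Output `s`-sparse-controllability for outputs `y_k = A x_k`. -/
def OutputSparseControllable (N L m s : ℕ) (D : Matrix (Fin N) (Fin N) ℝ)
    (H : Matrix (Fin N) (Fin L) ℝ) (A : Matrix (Fin m) (Fin N) ℝ) : Prop :=
  ∀ (x0 : Fin N → ℝ) (yfinal : Fin m → ℝ), ∃ K : ℕ, 0 < K ∧ ∃ h : Fin K → Fin L → ℝ,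
    (∀ k, IsSparse s (h k)) ∧
    yfinal - A *ᵥ ((D ^ K) *ᵥ x0)
      = ∑ k : Fin K, A *ᵥ ((D ^ (K - 1 - (k : ℕ))) *ᵥ (H *ᵥ h k))

/-! If `z` annihilates the rows of `A [λI − D | H]`, then `w = zA` is a left eigenvector of `D`
for `λ` with `wH = 0`, hence `z A Dʲ H = 0` for every `j`. Steering from `x₀ = 0`, output
controllability writes every real output as a sum of vectors `A Dʲ H u`, so `z` is orthogonal to
all real vectors and must vanish: the `m` rows are linearly independent. -/

theorem Matrix.rank_eq_card_of_vecMul_eq_zero {m n K : Type*} [Fintype m] [Fintype n] [Field K]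
    {M : Matrix m n K} (h : ∀ v, v ᵥ* M = 0 → v = 0) : M.rank = Fintype.card m :=
  (vecMul_injective_iff.1 ((injective_iff_map_eq_zero (vecMulLinear M)).2 h)).rank_matrix

namespace Matrix

variable {n p R : Type*} [Fintype n] [DecidableEq n] [CommRing R]

theorem vecMul_pow_of_vecMul_eq_smul {w : n → R} {M : Matrix n n R} {c : R}
    (h : w ᵥ* M = c • w) (k : ℕ) : w ᵥ* M ^ k = c ^ k • w := by
  induction k with
  | zero => simp
  | succ k ih => rw [pow_succ, ← vecMul_vecMul, ih, smul_vecMul, h, smul_smul, pow_succ]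

theorem vecMul_pow_mul_eq_zero {w : n → R} {M : Matrix n n R} {c : R} {B : Matrix n p R}
    (hM : w ᵥ* M = c • w) (hB : w ᵥ* B = 0) (k : ℕ) : w ᵥ* (M ^ k * B) = 0 := by
  rw [← vecMul_vecMul, vecMul_pow_of_vecMul_eq_smul hM, smul_vecMul, hB, smul_zero]

theorem vecMul_fromCols_smul_one_sub_eq_zero_iff {w : n → R} {M : Matrix n n R} {c : R}
    {B : Matrix n p R} : w ᵥ* fromCols (c • 1 - M) B = 0 ↔ w ᵥ* M = c • w ∧ w ᵥ* B = 0 := by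
  rw [vecMul_fromCols, ← Sum.elim_zero_zero, Sum.elim_eq_iff, vecMul_sub, vecMul_smul,
    vecMul_one, sub_eq_zero, eq_comm]

end Matrix

theorem eq_zero_of_forall_dotProduct_comp_eq_zero {m R S : Type*} [Fintype m] [DecidableEq m]
    [Semiring R] [Semiring S] (f : R →+* S) {z : m → S} (h : ∀ y : m → R, z ⬝ᵥ (f ∘ y) = 0) :
    z = 0 := by
  funext i
  have hsingle : f ∘ Pi.single i 1 = Pi.single i 1 := by
    funext j
    by_cases hj : j = i <;> simp [hj]
  simpa [hsingle] using h (Pi.single i 1)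

section OutputControllable

variable {N L m : ℕ} {D : Matrix (Fin N) (Fin N) ℝ} {H : Matrix (Fin N) (Fin L) ℝ}
  {A : Matrix (Fin m) (Fin N) ℝ}

theorem OutputControllable.exists_eq_sum (hctrl : OutputControllable N L m D H A)
    (y : Fin m → ℝ) :
    ∃ (K : ℕ) (h : Fin K → Fin L → ℝ), y = ∑ k : Fin K, (A * D ^ (K - 1 - k) * H) *ᵥ h k := by
  obtain ⟨K, -, h, hy⟩ := hctrl 0 y
  exact ⟨K, h, by simpa [mulVec_mulVec, Matrix.mul_assoc] using hy⟩

theorem OutputControllable.eq_zero_of_vecMul_eq_zero (hctrl : OutputControllable N L m D H A)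
    {z : Fin m → ℂ} (hz : ∀ j : ℕ, z ᵥ* (A * D ^ j * H).map Complex.ofRealHom = 0) : z = 0 := by
  refine eq_zero_of_forall_dotProduct_comp_eq_zero Complex.ofRealHom fun y => ?_
  obtain ⟨K, h, rfl⟩ := hctrl.exists_eq_sum y
  have hsum : Complex.ofRealHom ∘ ∑ k : Fin K, (A * D ^ (K - 1 - k) * H) *ᵥ h k =
      ∑ k : Fin K,
        (A * D ^ (K - 1 - k) * H).map Complex.ofRealHom *ᵥ (Complex.ofRealHom ∘ h k) := by
    funext i
    simp [Finset.sum_apply, RingHom.map_mulVec]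
  rw [hsum, dotProduct_sum]
  exact Finset.sum_eq_zero fun k _ => by rw [dotProduct_mulVec, hz, zero_dotProduct]

end OutputControllable

theorem output_controllable_pbh_necessary_general (N L m : ℕ)
    (D : Matrix (Fin N) (Fin N) ℝ) (H : Matrix (Fin N) (Fin L) ℝ)
    (A : Matrix (Fin m) (Fin N) ℝ)
    (hctrl : OutputControllable N L m D H A) :
    ∀ lam : ℂ, (A.map Complex.ofReal * pbhMatrix D H lam).rank = m := by
  intro lam
  have hrows : ∀ z : Fin m → ℂ, z ᵥ* (A.map Complex.ofReal * pbhMatrix D H lam) = 0 → z = 0 := by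
    intro z hz
    rw [← vecMul_vecMul, pbhMatrix, vecMul_fromCols_smul_one_sub_eq_zero_iff] at hz
    refine hctrl.eq_zero_of_vecMul_eq_zero fun j => ?_
    have hmap : (A * D ^ j * H).map Complex.ofRealHom =
        A.map Complex.ofReal * (D.map Complex.ofReal ^ j * H.map Complex.ofReal) := by
      rw [Matrix.map_mul, Matrix.map_mul, ← RingHom.mapMatrix_apply, map_pow, Matrix.mul_assoc]
      rfl
    rw [hmap, ← vecMul_vecMul]
    exact vecMul_pow_mul_eq_zero hz.1 hz.2 j
  simpa using rank_eq_card_of_vecMul_eq_zero hrows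

/-- Necessary PBH-type condition for output controllability: if `(D,H,A)` is output
controllable then `A · [λI − D | H]` has rank `m` for every `λ ∈ ℂ`. -/
theorem output_controllable_pbh_necessary (N L m : ℕ) (hN : 0 < N) (hL : 0 < L) (hm : 0 < m)
    (D : Matrix (Fin N) (Fin N) ℝ) (H : Matrix (Fin N) (Fin L) ℝ)
    (A : Matrix (Fin m) (Fin N) ℝ)
    (hctrl : OutputControllable N L m D H A) :
    ∀ lam : ℂ, (A.map Complex.ofReal * pbhMatrix D H lam).rank = m :=
  output_controllable_pbh_necessary_general N L m D H A hctrl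
end

section
/- Suppose the system is controllable using s-sparse inputs with a common support, i.e., there exist an index set S ⊆ {1,…,L} with |S| = s and, for every x_init, x_final ∈ ℝ^N, a positive integer K and inputs h_1,…,h_K supported on S steering x_init to x_final. Then min{rank(H), s} ≥ g_D ≥ N − rank(D), where g_D is the largest geometric multiplicity of a complex eigenvalue of D, i.e., the maximum over λ ∈ ℂ of the dimension over ℂ of the kernel of λI − D. -/
/-!
If a complex row vector `v` satisfies `v D = λ v` and `(v H)_j = 0` for `j ∈ S`, then
`v D^t H u = λ^t (v H) u = 0` for every input `u` supported on `S`, so `v` annihilates every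
state reachable from the origin, i.e. all of `ℝ^N`, and `v = 0`. Hence `v ↦ (v H)|_S` is injective
on the left eigenspace of `λ`, whose dimension is that of `ker (λ I − D)`; this gives
`g_D ≤ min (rank H) s`. The lower bound is the eigenvalue `0`, as `dim ker D = N − rank D` and
complexification does not increase the rank.
-/

open Matrix

open Module Submodule

theorem Submodule.finrank_span_le_finrank_of_isScalarTower {R K M : Type*} [Field R] [Field K]
    [Algebra R K] [AddCommGroup M] [Module R M] [Module K M] [IsScalarTower R K M]
    (W : Submodule R M) [FiniteDimensional R W] :
    finrank K (span K (W : Set M)) ≤ finrank R W := by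
  let b := Module.finBasis R W
  have hW : W = span R (Set.range (W.subtype ∘ b)) := by
    rw [Set.range_comp, ← Submodule.map_span, b.span_eq, Submodule.map_subtype_top]
  calc finrank K (span K (W : Set M))
      = finrank K (span K (Set.range (W.subtype ∘ b))) := by
        conv_lhs => rw [hW, span_span_of_tower]
    _ ≤ finrank R W := (finrank_range_le_card _).trans_eq (Fintype.card_fin _)

theorem Matrix.rank_map_algebraMap_le {R K m n : Type*} [Field R] [Field K] [Algebra R K]
    [Fintype n] (A : Matrix m n R) : (A.map (algebraMap R K)).rank ≤ A.rank := by
  let φ : (m → R) →ₗ[R] (m → K) := (Algebra.linearMap R K).compLeft m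
  have hcols : Set.range (A.map (algebraMap R K)).col = φ '' Set.range A.col := by
    rw [← Set.range_comp]; rfl
  have := FiniteDimensional.span_of_finite R (Set.finite_range A.col)
  calc (A.map (algebraMap R K)).rank
      = finrank K (span K ((span R (Set.range A.col)).map φ : Set (m → K))) := by
        rw [rank_eq_finrank_span_cols, Submodule.map_span, ← hcols, span_span_of_tower]
    _ ≤ finrank R ((span R (Set.range A.col)).map φ) :=
        Submodule.finrank_span_le_finrank_of_isScalarTower _
    _ ≤ A.rank := (Submodule.finrank_map_le φ _).trans_eq (rank_eq_finrank_span_cols A).symm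

section Kernel

variable {K n m : Type*} [Field K] [Fintype n]

theorem Matrix.finrank_ker_mulVecLin (A : Matrix n n K) :
    finrank K (LinearMap.ker A.mulVecLin) = Fintype.card n - A.rank := by
  have h := A.mulVecLin.finrank_range_add_finrank_ker
  rw [finrank_fintype_fun_eq_card] at h
  rw [Matrix.rank]
  omega

theorem Matrix.finrank_ker_vecMulLinear (A : Matrix n n K) :
    finrank K (LinearMap.ker A.vecMulLinear) = finrank K (LinearMap.ker A.mulVecLin) := by
  rw [← mulVecLin_transpose, finrank_ker_mulVecLin, finrank_ker_mulVecLin, rank_transpose]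

theorem Submodule.finrank_le_card_of_injOn_vecMul_restrict (B : Matrix n m K) (S : Finset m)
    (W : Submodule K (n → K)) (hW : ∀ v ∈ W, (∀ j ∈ S, (v ᵥ* B) j = 0) → v = 0) :
    finrank K W ≤ S.card := by
  let χ : W →ₗ[K] (S → K) :=
    LinearMap.funLeft K K ((↑) : S → m) ∘ₗ B.vecMulLinear ∘ₗ W.subtype
  have hχ : Function.Injective χ := by
    rw [← LinearMap.ker_eq_bot, LinearMap.ker_eq_bot']
    intro v hv
    exact Subtype.ext (hW v v.2 fun j hj => congrFun hv ⟨j, hj⟩)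
  simpa using LinearMap.finrank_le_finrank_of_injective hχ

theorem Submodule.finrank_le_rank_of_injOn_vecMul [Fintype m] (B : Matrix n m K)
    (W : Submodule K (n → K)) (hW : ∀ v ∈ W, v ᵥ* B = 0 → v = 0) :
    finrank K W ≤ B.rank := by
  have hinj : Function.Injective (B.vecMulLinear.domRestrict W) := by
    rw [← LinearMap.ker_eq_bot, LinearMap.ker_eq_bot']
    exact fun v hv => Subtype.ext (hW v v.2 hv)
  calc finrank K W = finrank K (LinearMap.range (B.vecMulLinear.domRestrict W)) :=
        (LinearMap.finrank_range_of_inj hinj).symm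
    _ ≤ finrank K (LinearMap.range B.vecMulLinear) :=
        Submodule.finrank_mono (LinearMap.range_domRestrict_le_range _ _)
    _ = B.rank := by rw [← mulVecLin_transpose, ← rank_transpose B]; rfl

theorem Matrix.card_sub_rank_le_finrank_ker_map {R : Type*} [Field R] [Algebra R K]
    (A : Matrix n n R) :
    Fintype.card n - A.rank ≤ finrank K (LinearMap.ker (A.map (algebraMap R K)).mulVecLin) := by
  rw [finrank_ker_mulVecLin]
  exact Nat.sub_le_sub_left A.rank_map_algebraMap_le _

end Kernel

section LeftEigenvector

variable {R n m : Type*} [CommSemiring R] [Fintype n] [DecidableEq n]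

theorem Matrix.vecMul_pow_of_vecMul_eq_smul_s8 {D : Matrix n n R} {v : n → R} {μ : R}
    (hv : v ᵥ* D = μ • v) (t : ℕ) : v ᵥ* D ^ t = μ ^ t • v := by
  induction t with
  | zero => simp
  | succ t ih => rw [pow_succ, ← vecMul_vecMul, ih, smul_vecMul, hv, smul_smul, pow_succ]

theorem Matrix.dotProduct_pow_mulVec_mulVec_eq_zero [Fintype m] {D : Matrix n n R}
    {B : Matrix n m R} {v : n → R} {μ : R} (hv : v ᵥ* D = μ • v) {S : Set m}
    (hvB : ∀ j ∈ S, (v ᵥ* B) j = 0) {u : m → R} (hu : ∀ j ∉ S, u j = 0) (t : ℕ) :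
    v ⬝ᵥ D ^ t *ᵥ (B *ᵥ u) = 0 := by
  have hvBu : (v ᵥ* B) ⬝ᵥ u = 0 :=
    Finset.sum_eq_zero fun j _ => by
      by_cases hj : j ∈ S
      · rw [hvB j hj, zero_mul]
      · rw [hu j hj, mul_zero]
  rw [dotProduct_mulVec, vecMul_pow_of_vecMul_eq_smul_s8 hv, smul_dotProduct, dotProduct_mulVec,
    hvBu, smul_zero]

end LeftEigenvector

def ReachableFromZeroOn {N L : ℕ} (S : Finset (Fin L)) (D : Matrix (Fin N) (Fin N) ℝ)
    (H : Matrix (Fin N) (Fin L) ℝ) : Prop :=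
  ∀ x : Fin N → ℝ, ∃ K, ∃ h : Fin K → Fin L → ℝ, (∀ k, ∀ j ∉ S, h k j = 0) ∧ Steers D H K h 0 x

theorem Steers.ofReal_eq_sum {N L K : ℕ} {D : Matrix (Fin N) (Fin N) ℝ}
    {H : Matrix (Fin N) (Fin L) ℝ} {h : Fin K → Fin L → ℝ} {x : Fin N → ℝ}
    (hx : Steers D H K h 0 x) :
    Complex.ofReal ∘ x = ∑ k : Fin K, (D.map Complex.ofReal) ^ (K - 1 - (k : ℕ)) *ᵥ
      (H.map Complex.ofReal *ᵥ Complex.ofReal ∘ h k) := by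
  have hmap : ∀ {p q : ℕ} (M : Matrix (Fin p) (Fin q) ℝ) (u : Fin q → ℝ),
      Complex.ofReal ∘ (M *ᵥ u) = M.map Complex.ofReal *ᵥ Complex.ofReal ∘ u :=
    fun M u => funext (RingHom.map_mulVec Complex.ofRealHom M u)
  rw [Steers, mulVec_zero, sub_zero] at hx
  subst hx
  ext i
  simp only [Function.comp_apply, Finset.sum_apply, Complex.ofReal_sum]
  refine Finset.sum_congr rfl fun k _ => ?_
  rw [← Function.comp_apply (f := Complex.ofReal), hmap, hmap]
  exact congrFun (congrArg (· *ᵥ _) (D.map_pow Complex.ofRealHom _)) i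

theorem eq_zero_of_forall_dotProduct_ofReal_eq_zero {n : Type*} [Fintype n] [DecidableEq n]
    {v : n → ℂ} (hv : ∀ x : n → ℝ, v ⬝ᵥ Complex.ofReal ∘ x = 0) : v = 0 := by
  ext i
  simpa [dotProduct, Pi.single_apply, apply_ite] using hv (Pi.single i 1)

theorem eq_zero_of_vecMul_eq_smul_of_forall_steers {N L : ℕ} {D : Matrix (Fin N) (Fin N) ℝ}
    {H : Matrix (Fin N) (Fin L) ℝ} {S : Finset (Fin L)}
    (hreach : ReachableFromZeroOn S D H)
    {v : Fin N → ℂ} {μ : ℂ} (hv : v ᵥ* D.map Complex.ofReal = μ • v)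
    (hvH : ∀ j ∈ S, (v ᵥ* H.map Complex.ofReal) j = 0) : v = 0 := by
  refine eq_zero_of_forall_dotProduct_ofReal_eq_zero fun x => ?_
  obtain ⟨K, h, hsupp, hx⟩ := hreach x
  rw [hx.ofReal_eq_sum, dotProduct_sum]
  refine Finset.sum_eq_zero fun k _ => dotProduct_pow_mulVec_mulVec_eq_zero hv (S := ↑S) hvH ?_ _
  intro j hj
  simp [hsupp k j hj]

theorem finrank_ker_smul_one_sub_le_of_forall_steers {N L : ℕ} {D : Matrix (Fin N) (Fin N) ℝ}
    {H : Matrix (Fin N) (Fin L) ℝ} {S : Finset (Fin L)}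
    (hreach : ReachableFromZeroOn S D H) (μ : ℂ) :
    finrank ℂ (LinearMap.ker ((μ • (1 : Matrix (Fin N) (Fin N) ℂ)
      - D.map Complex.ofReal).mulVecLin)) ≤ min H.rank S.card := by
  set A := μ • (1 : Matrix (Fin N) (Fin N) ℂ) - D.map Complex.ofReal
  have hW : ∀ v ∈ LinearMap.ker A.vecMulLinear,
      (∀ j ∈ S, (v ᵥ* H.map Complex.ofReal) j = 0) → v = 0 := by
    intro v hv hvH
    refine eq_zero_of_vecMul_eq_smul_of_forall_steers hreach (μ := μ) ?_ hvH
    have hvA : v ᵥ* A = 0 := hv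
    rwa [vecMul_sub, vecMul_smul, vecMul_one, sub_eq_zero, eq_comm] at hvA
  rw [← finrank_ker_vecMulLinear]
  refine le_min ?_ (finrank_le_card_of_injOn_vecMul_restrict _ S _ hW)
  calc _ ≤ (H.map Complex.ofReal).rank :=
        finrank_le_rank_of_injOn_vecMul _ _ fun v hv hvH => hW v hv fun j _ => by rw [hvH]; rfl
    _ ≤ H.rank := by simpa using H.rank_map_algebraMap_le (K := ℂ)

theorem common_support_geometric_multiplicity_bound_general (N L s : ℕ)
    (D : Matrix (Fin N) (Fin N) ℝ) (H : Matrix (Fin N) (Fin L) ℝ)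
    (hctrl : ∃ S : Finset (Fin L), S.card = s ∧
      ∀ xinit xfinal : Fin N → ℝ, ∃ K : ℕ, 0 < K ∧ ∃ h : Fin K → Fin L → ℝ,
        (∀ k, ∀ j ∉ S, h k j = 0) ∧ Steers D H K h xinit xfinal)
    (gD : ℕ)
    (hgD : gD = ⨆ lam : ℂ, Module.finrank ℂ
      (LinearMap.ker ((lam • (1 : Matrix (Fin N) (Fin N) ℂ)
        - D.map Complex.ofReal).mulVecLin))) :
    N - D.rank ≤ gD ∧ gD ≤ min H.rank s := by
  obtain ⟨S, rfl, hS⟩ := hctrl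
  have hreach : ReachableFromZeroOn S D H := fun x =>
    let ⟨K, _, h, hsupp, hx⟩ := hS 0 x; ⟨K, h, hsupp, hx⟩
  have hbound := finrank_ker_smul_one_sub_le_of_forall_steers hreach
  subst hgD
  refine ⟨?_, ciSup_le hbound⟩
  calc N - D.rank ≤ finrank ℂ (LinearMap.ker (D.map Complex.ofReal).mulVecLin) := by
        simpa using D.card_sub_rank_le_finrank_ker_map (K := ℂ)
    _ = finrank ℂ (LinearMap.ker (((0 : ℂ) • (1 : Matrix (Fin N) (Fin N) ℂ)
          - D.map Complex.ofReal).mulVecLin)) := by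
        have hneg : (-D.map Complex.ofReal).mulVecLin = -(D.map Complex.ofReal).mulVecLin :=
          LinearMap.ext fun v => neg_mulVec v _
        rw [zero_smul, zero_sub, hneg, LinearMap.ker_neg]
    _ ≤ _ := le_ciSup ⟨_, Set.forall_mem_range.2 hbound⟩ 0

/-- If `(D,H)` is controllable using `s`-sparse inputs with a common support `S`, then
`min{rank H, s} ≥ g_D ≥ N − rank D`, where `g_D` is the largest geometric multiplicity
of a complex eigenvalue of `D`. -/
theorem common_support_geometric_multiplicity_bound (N L s : ℕ) (hN : 0 < N) (hL : 0 < L)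
    (hs : 0 < s) (hsL : s ≤ L)
    (D : Matrix (Fin N) (Fin N) ℝ) (H : Matrix (Fin N) (Fin L) ℝ)
    (hctrl : ∃ S : Finset (Fin L), S.card = s ∧
      ∀ xinit xfinal : Fin N → ℝ, ∃ K : ℕ, 0 < K ∧ ∃ h : Fin K → Fin L → ℝ,
        (∀ k, ∀ j ∉ S, h k j = 0) ∧ Steers D H K h xinit xfinal)
    (gD : ℕ)
    (hgD : gD = ⨆ lam : ℂ, Module.finrank ℂ
      (LinearMap.ker ((lam • (1 : Matrix (Fin N) (Fin N) ℂ)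
        - D.map Complex.ofReal).mulVecLin))) :
    N - D.rank ≤ gD ∧ gD ≤ min H.rank s :=
  common_support_geometric_multiplicity_bound_general N L s D H hctrl gD hgD
end

section
/- For a controllable system (D,H), the minimum positive integer K such that every initial state can be steered to every final state using exactly K (unconstrained) input vectors satisfies N / rank(H) ≤ K ≤ min{q, N − rank(H) + 1} ≤ N, where q is the degree of the minimal polynomial of D. -/
/-!
The states reachable from `0` in `K` steps form the block Krylov subspace
`R_K = W + D W + ⋯ + D^(K-1) W` with `W = range H`, and steering everything to everything with
exactly `K` inputs means `R_K = ℝ^N`. Each step adds at most `rank H` dimensions, so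
`N ≤ K · rank H`. Since `R_(K+1) = W + D R_K`, the chain is stationary from its first stall on;
controllability therefore makes it grow strictly until it is `ℝ^N`, which takes at most
`N - rank H + 1` steps, and it stalls at `q` because `D^q` is a combination of lower powers of `D`.
-/

open Matrix

/-- Every initial state can be steered to every final state using exactly `K`
(unconstrained) input vectors. -/
def UnivSteers (N L : ℕ) (D : Matrix (Fin N) (Fin N) ℝ) (H : Matrix (Fin N) (Fin L) ℝ)
    (K : ℕ) : Prop :=
  ∀ xinit xfinal : Fin N → ℝ, ∃ h : Fin K → Fin L → ℝ, Steers D H K h xinit xfinal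

open Module Polynomial

section Krylov

variable {k V : Type*} [Field k] [AddCommGroup V] [Module k V] (f : Module.End k V)
  (W : Submodule k V)

def krylovSubspace (K : ℕ) : Submodule k V :=
  ⨆ j ∈ Finset.range K, W.map (f ^ j)

theorem krylovSubspace_mono : Monotone (krylovSubspace f W) := fun _ _ hKK' =>
  biSup_mono fun _ hj => Finset.range_subset_range.mpr hKK' hj

theorem map_pow_le_krylovSubspace {j K : ℕ} (hj : j < K) :
    W.map (f ^ j) ≤ krylovSubspace f W K :=
  le_biSup (fun j => W.map (f ^ j)) (Finset.mem_range.mpr hj)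

@[simp]
theorem krylovSubspace_zero : krylovSubspace f W 0 = ⊥ := by
  simp [krylovSubspace]

theorem krylovSubspace_succ (K : ℕ) :
    krylovSubspace f W (K + 1) = krylovSubspace f W K ⊔ W.map (f ^ K) := by
  rw [krylovSubspace, Finset.range_add_one, Finset.iSup_insert, sup_comm, krylovSubspace]

@[simp]
theorem krylovSubspace_one : krylovSubspace f W 1 = W := by
  simp [krylovSubspace_succ, Module.End.one_eq_id]

theorem krylovSubspace_succ' (K : ℕ) :
    krylovSubspace f W (K + 1) = W ⊔ (krylovSubspace f W K).map f := by
  induction K with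
  | zero => simp
  | succ K ih =>
    calc krylovSubspace f W (K + 1 + 1)
        = W ⊔ (krylovSubspace f W K).map f ⊔ (W.map (f ^ K)).map f := by
          rw [krylovSubspace_succ, ih, pow_succ', Module.End.mul_eq_comp, Submodule.map_comp]
      _ = W ⊔ (krylovSubspace f W (K + 1)).map f := by
          rw [krylovSubspace_succ f W K, Submodule.map_sup, sup_assoc]

theorem mem_krylovSubspace_iff {K : ℕ} {v : V} :
    v ∈ krylovSubspace f W K ↔
      ∃ w : Fin K → V, (∀ i, w i ∈ W) ∧ ∑ i : Fin K, (f ^ (K - 1 - i)) (w i) = v := by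
  constructor
  · intro hv
    obtain ⟨μ, rfl⟩ := (Submodule.mem_iSup_finset_iff_exists_sum _ v).mp hv
    choose w hw hfw using fun j => Submodule.mem_map.mp (μ j).2
    refine ⟨fun i => w (K - 1 - i), fun i => hw _, ?_⟩
    rw [Fin.sum_univ_eq_sum_range (fun i => (f ^ (K - 1 - i)) (w (K - 1 - i))),
      ← Finset.sum_range_reflect]
    refine Finset.sum_congr rfl fun j hj => ?_
    rw [Nat.sub_sub_self (by simp at hj; omega), hfw]
  · rintro ⟨w, hw, rfl⟩
    exact Submodule.sum_mem _ fun i _ =>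
      map_pow_le_krylovSubspace f W (by omega) (Submodule.mem_map_of_mem (hw i))

theorem krylovSubspace_add_eq_of_succ_eq {K : ℕ}
    (h : krylovSubspace f W (K + 1) = krylovSubspace f W K) (m : ℕ) :
    krylovSubspace f W (K + m) = krylovSubspace f W K := by
  induction m with
  | zero => rfl
  | succ m ih => rw [← add_assoc, krylovSubspace_succ', ih, ← krylovSubspace_succ', h]

theorem krylovSubspace_eq_top_of_succ_eq (hW : ⨆ K, krylovSubspace f W K = ⊤) {K : ℕ}
    (h : krylovSubspace f W (K + 1) = krylovSubspace f W K) : krylovSubspace f W K = ⊤ := by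
  refine top_le_iff.mp (hW ▸ iSup_le fun n => ?_)
  rw [← krylovSubspace_add_eq_of_succ_eq f W h n]
  exact krylovSubspace_mono f W (Nat.le_add_left n K)

theorem aeval_apply_mem_krylovSubspace {p : k[X]} {K : ℕ} (hp : p.degree < K) {w : V}
    (hw : w ∈ W) : aeval f p w ∈ krylovSubspace f W K := by
  rcases eq_or_ne p 0 with rfl | hp0
  · simp
  rw [aeval_eq_sum_range' ((natDegree_lt_iff_degree_lt hp0).mpr hp), LinearMap.sum_apply]
  refine Submodule.sum_mem _ fun j hj => ?_
  rw [LinearMap.smul_apply]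
  exact Submodule.smul_mem _ _
    (map_pow_le_krylovSubspace f W (Finset.mem_range.mp hj) (Submodule.mem_map_of_mem hw))

variable [FiniteDimensional k V]

/-- `f ^ q` is a combination of lower powers of `f`, namely `(X ^ q %ₘ minpoly k f)(f)`. -/
theorem map_pow_natDegree_minpoly_le_krylovSubspace :
    W.map (f ^ (minpoly k f).natDegree) ≤ krylovSubspace f W (minpoly k f).natDegree := by
  have hmonic : (minpoly k f).Monic := minpoly.monic (LinearMap.isIntegral f)
  rintro _ ⟨w, hw, rfl⟩
  rw [← aeval_X_pow (R := k), ← aeval_modByMonic_eq_self_of_root (minpoly.aeval k f)]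
  refine aeval_apply_mem_krylovSubspace f W ?_ hw
  rw [← degree_eq_natDegree hmonic.ne_zero]
  exact degree_modByMonic_lt _ hmonic

theorem krylovSubspace_natDegree_minpoly_eq_top (hW : ⨆ K, krylovSubspace f W K = ⊤) :
    krylovSubspace f W (minpoly k f).natDegree = ⊤ :=
  krylovSubspace_eq_top_of_succ_eq f W hW <| by
    rw [krylovSubspace_succ, sup_eq_left]
    exact map_pow_natDegree_minpoly_le_krylovSubspace f W

theorem finrank_krylovSubspace_le (K : ℕ) :
    finrank k (krylovSubspace f W K) ≤ K * finrank k W := by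
  induction K with
  | zero => simp
  | succ K ih =>
    calc finrank k (krylovSubspace f W (K + 1))
        ≤ finrank k (krylovSubspace f W K) + finrank k (W.map (f ^ K)) := by
          rw [krylovSubspace_succ]; exact Submodule.finrank_add_le_finrank_add_finrank _ _
      _ ≤ K * finrank k W + finrank k W := add_le_add ih (Submodule.finrank_map_le _ _)
      _ = (K + 1) * finrank k W := by ring

theorem krylovSubspace_succ_eq_top_or_le_finrank (hW : ⨆ K, krylovSubspace f W K = ⊤) (K : ℕ) :
    krylovSubspace f W (K + 1) = ⊤ ∨ finrank k W + K ≤ finrank k (krylovSubspace f W (K + 1)) := by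
  induction K with
  | zero => exact .inr (by rw [zero_add, krylovSubspace_one, add_zero])
  | succ K ih =>
    rcases ih with htop | hle
    · exact .inl (top_le_iff.mp (htop ▸ krylovSubspace_mono f W (K + 1).le_succ))
    by_cases hstall : krylovSubspace f W (K + 1 + 1) = krylovSubspace f W (K + 1)
    · exact .inl (hstall ▸ krylovSubspace_eq_top_of_succ_eq f W hW hstall)
    · have hlt : krylovSubspace f W (K + 1) < krylovSubspace f W (K + 1 + 1) :=
        lt_of_le_of_ne (krylovSubspace_mono f W (K + 1).le_succ) (Ne.symm hstall)
      have := Submodule.finrank_lt_finrank_of_lt hlt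
      exact .inr (by omega)

theorem krylovSubspace_finrank_sub_add_one_eq_top (hW : ⨆ K, krylovSubspace f W K = ⊤) :
    krylovSubspace f W (finrank k V - finrank k W + 1) = ⊤ := by
  refine (krylovSubspace_succ_eq_top_or_le_finrank f W hW _).elim id fun hle => ?_
  apply Submodule.eq_top_of_finrank_eq
  have := Submodule.finrank_le W
  have := Submodule.finrank_le (krylovSubspace f W (finrank k V - finrank k W + 1))
  omega

theorem LinearMap.natDegree_minpoly_le_finrank : (minpoly k f).natDegree ≤ finrank k V :=
  LinearMap.charpoly_natDegree f ▸
    natDegree_le_of_dvd (LinearMap.minpoly_dvd_charpoly f) (LinearMap.charpoly_monic f).ne_zero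

end Krylov

section Steering

variable {N L : ℕ} (D : Matrix (Fin N) (Fin N) ℝ) (H : Matrix (Fin N) (Fin L) ℝ)

theorem exists_steers_iff_mem_krylovSubspace (K : ℕ) (xinit xfinal : Fin N → ℝ) :
    (∃ h, Steers D H K h xinit xfinal) ↔
      xfinal - (D ^ K) *ᵥ xinit ∈ krylovSubspace (toLin' D) (LinearMap.range (toLin' H)) K := by
  simp only [Steers, mem_krylovSubspace_iff, ← toLin'_pow, toLin'_apply, LinearMap.mem_range]
  constructor
  · rintro ⟨h, hs⟩
    exact ⟨fun i => H *ᵥ h i, fun i => ⟨h i, rfl⟩, hs.symm⟩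
  · rintro ⟨w, hw, hsum⟩
    choose h hh using hw
    exact ⟨h, by simp only [hh, hsum]⟩

theorem univSteers_iff_krylovSubspace_eq_top (K : ℕ) :
    UnivSteers N L D H K ↔ krylovSubspace (toLin' D) (LinearMap.range (toLin' H)) K = ⊤ := by
  refine ⟨fun h => Submodule.eq_top_iff'.mpr fun y => ?_, fun h x y => ?_⟩
  · simpa using (exists_steers_iff_mem_krylovSubspace D H K 0 y).mp (h 0 y)
  · exact (exists_steers_iff_mem_krylovSubspace D H K x y).mpr (h ▸ Submodule.mem_top)

theorem Controllable.iSup_krylovSubspace_eq_top (hctrl : Controllable N D H) :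
    ⨆ K, krylovSubspace (toLin' D) (LinearMap.range (toLin' H)) K = ⊤ := by
  refine Submodule.eq_top_iff'.mpr fun y => ?_
  obtain ⟨K, -, h, hs⟩ := hctrl 0 y
  refine Submodule.mem_iSup_of_mem K ?_
  simpa using (exists_steers_iff_mem_krylovSubspace D H K 0 y).mp ⟨h, hs⟩

theorem div_rank_le_of_univSteers {K : ℕ} (hK : UnivSteers N L D H K) : N / H.rank ≤ K := by
  refine Nat.div_le_of_le_mul ?_
  calc N = finrank ℝ (krylovSubspace (toLin' D) (LinearMap.range (toLin' H)) K) := by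
        rw [(univSteers_iff_krylovSubspace_eq_top D H K).mp hK, finrank_top, finrank_fin_fun]
    _ ≤ K * H.rank := finrank_krylovSubspace_le _ _ K
    _ = H.rank * K := mul_comm _ _

theorem Controllable.univSteers_min (hctrl : Controllable N D H) :
    UnivSteers N L D H (min (minpoly ℝ D).natDegree (N - H.rank + 1)) := by
  have hW := hctrl.iSup_krylovSubspace_eq_top
  rw [univSteers_iff_krylovSubspace_eq_top]
  rcases min_choice (minpoly ℝ D).natDegree (N - H.rank + 1) with h | h <;> rw [h]
  · simpa only [minpoly_toLin'] using krylovSubspace_natDegree_minpoly_eq_top _ _ hW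
  · have := krylovSubspace_finrank_sub_add_one_eq_top _ _ hW
    rwa [finrank_fin_fun] at this

end Steering

theorem min_inputs_unconstrained_general (N L : ℕ) (hN : 0 < N)
    (D : Matrix (Fin N) (Fin N) ℝ) (H : Matrix (Fin N) (Fin L) ℝ)
    (hctrl : Controllable N D H)
    (q : ℕ) (hq : q = (minpoly ℝ D).natDegree) :
    ∃ K : ℕ, IsLeast {K' : ℕ | 0 < K' ∧ UnivSteers N L D H K'} K ∧
      N / H.rank ≤ K ∧ K ≤ min q (N - H.rank + 1) ∧ min q (N - H.rank + 1) ≤ N := by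
  have hqN : q ≤ N := by
    simpa [hq, minpoly_toLin'] using LinearMap.natDegree_minpoly_le_finrank (toLin' D)
  have hq0 : 0 < q := by
    have : Nonempty (Fin N) := ⟨⟨0, hN⟩⟩
    exact hq ▸ minpoly.natDegree_pos (Matrix.isIntegral D)
  have hmin : 0 < min q (N - H.rank + 1) ∧ UnivSteers N L D H (min q (N - H.rank + 1)) :=
    ⟨lt_min hq0 (N - H.rank).succ_pos, hq ▸ hctrl.univSteers_min⟩
  have hne : {K' : ℕ | 0 < K' ∧ UnivSteers N L D H K'}.Nonempty := ⟨_, hmin⟩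
  exact ⟨sInf _, ⟨Nat.sInf_mem hne, fun K hK => Nat.sInf_le hK⟩,
    div_rank_le_of_univSteers D H (Nat.sInf_mem hne).2, Nat.sInf_le hmin,
    (min_le_left _ _).trans hqN⟩

/-- For a controllable system, the minimum number `K` of unconstrained input vectors
needed to steer any state to any other satisfies
`N / rank H ≤ K ≤ min{q, N − rank H + 1} ≤ N`, where `q = deg(minpoly D)`. -/
theorem min_inputs_unconstrained (N L : ℕ) (hN : 0 < N) (hL : 0 < L)
    (D : Matrix (Fin N) (Fin N) ℝ) (H : Matrix (Fin N) (Fin L) ℝ)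
    (hctrl : Controllable N D H)
    (q : ℕ) (hq : q = (minpoly ℝ D).natDegree) :
    ∃ K : ℕ, IsLeast {K' : ℕ | 0 < K' ∧ UnivSteers N L D H K'} K ∧
      N / H.rank ≤ K ∧ K ≤ min q (N - H.rank + 1) ∧ min q (N - H.rank + 1) ≤ N :=
  min_inputs_unconstrained_general N L hN D H hctrl q hq
end

section
/- For a system (D,H) that is controllable using s-sparse inputs with a common support (i.e., there exists S ⊆ {1,…,L} with |S| = s such that every initial state can be steered to every final state by inputs all supported on S), the minimum positive integer K* such that every initial state can be steered to every final state using exactly K* such common-support inputs satisfies N / R* ≤ K* ≤ min{ q, N − R* + 1 } ≤ N, where R* = min{rank(H), s} and q is the degree of the minimal polynomial of D. -/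
/-!
Inputs supported on `S` feed the state only through `U_S`, the span of the columns of `H`
indexed by `S`, so `K` such inputs reach exactly the Krylov space
`W_K = U_S + D U_S + ⋯ + D^(K-1) U_S`, and `K` inputs suffice iff `W_K` is everything.
Since `dim W_K ≤ K · dim U_S ≤ K · R*`, at least `N / R*` inputs are needed. Reducing `X^i`
modulo the minimal polynomial shows `W_K ≤ W_q` for every `K`, so `q` inputs suffice.
The chain `W_1 ≤ W_2 ≤ ⋯` starts at dimension `dim U_S` and, as `W_(K+1) = U_S + D W_K`, grows
strictly until it stabilises, so it is everything after `N - dim U_S + 1` steps. Finally a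
basis-exchange argument enlarges `U_S` to dimension at least `R*` without changing `|S|`.
-/

open Matrix

/-- Every initial state can be steered to every final state using exactly `K` inputs
all supported on a common index set of cardinality `s`. -/
def UnivCommonSupportSteers (N L s : ℕ) (D : Matrix (Fin N) (Fin N) ℝ)
    (H : Matrix (Fin N) (Fin L) ℝ) (K : ℕ) : Prop :=
  ∃ S : Finset (Fin L), S.card = s ∧
    ∀ xinit xfinal : Fin N → ℝ, ∃ h : Fin K → Fin L → ℝ,
      (∀ k, ∀ j ∉ S, h k j = 0) ∧ Steers D H K h xinit xfinal

open Submodule Module Polynomial Set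

namespace Submodule

section CommRing

variable {R M : Type*} [CommRing R] [AddCommGroup M] [Module R M]
  (f : Module.End R M) (U : Submodule R M)

def krylov (K : ℕ) : Submodule R M :=
  ⨆ i < K, U.map (f ^ i)

variable {f U}

theorem krylov_le_iff {K : ℕ} {P : Submodule R M} :
    krylov f U K ≤ P ↔ ∀ i < K, U.map (f ^ i) ≤ P := by
  simp only [krylov, iSup_le_iff]

theorem map_pow_le_krylov {i K : ℕ} (hi : i < K) : U.map (f ^ i) ≤ krylov f U K :=
  le_biSup (fun i => U.map (f ^ i)) hi

theorem krylov_mono_right {U' : Submodule R M} (h : U ≤ U') (K : ℕ) :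
    krylov f U K ≤ krylov f U' K :=
  krylov_le_iff.2 fun _ hi => (map_mono h).trans (map_pow_le_krylov hi)

variable (f U)

@[simp]
theorem krylov_zero : krylov f U 0 = ⊥ := by
  simp [krylov]

theorem krylov_succ (K : ℕ) : krylov f U (K + 1) = U ⊔ (krylov f U K).map f := by
  simp only [krylov, Nat.iSup_lt_succ', pow_zero, Module.End.one_eq_id, map_id, map_iSup,
    pow_succ', Module.End.mul_eq_comp, map_comp]

theorem krylov_one : krylov f U 1 = U := by
  simp [krylov_succ]

theorem krylov_mono : Monotone (krylov f U) := fun _ _ hKK' =>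
  krylov_le_iff.2 fun _ hi => map_pow_le_krylov (hi.trans_le hKK')

theorem krylov_le_of_succ_eq {K : ℕ} (h : krylov f U (K + 1) = krylov f U K) (m : ℕ) :
    krylov f U m ≤ krylov f U K := by
  induction m with
  | zero => simp
  | succ m ih =>
    calc krylov f U (m + 1) = U ⊔ (krylov f U m).map f := krylov_succ f U m
      _ ≤ U ⊔ (krylov f U K).map f := sup_le_sup_left (map_mono ih) _
      _ = krylov f U K := by rw [← krylov_succ, h]

theorem aeval_apply_mem_krylov (p : R[X]) {x : M} (hx : x ∈ U) :
    aeval f p x ∈ krylov f U (p.natDegree + 1) := by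
  rw [aeval_eq_sum_range, LinearMap.sum_apply]
  exact sum_mem fun i hi =>
    smul_mem _ _ (map_pow_le_krylov (Finset.mem_range.1 hi) ⟨x, hx, rfl⟩)

end CommRing

section Field

variable {R M : Type*} [Field R] [AddCommGroup M] [Module R M] [FiniteDimensional R M]
  (f : Module.End R M) (U : Submodule R M)

theorem krylov_le_krylov_natDegree_minpoly (K : ℕ) :
    krylov f U K ≤ krylov f U (minpoly R f).natDegree := by
  nontriviality M
  refine krylov_le_iff.2 fun i _ => ?_
  rintro _ ⟨x, hx, rfl⟩
  have hdeg : (X ^ i %ₘ minpoly R f).natDegree < (minpoly R f).natDegree :=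
    natDegree_modByMonic_lt _ (minpoly.monic (Algebra.IsIntegral.isIntegral f))
      (minpoly.ne_one R f)
  have hmem := aeval_apply_mem_krylov f U (X ^ i %ₘ minpoly R f) hx
  rw [minpoly.aeval_modByMonic_minpoly, aeval_X_pow] at hmem
  exact krylov_mono f U hdeg hmem

theorem finrank_krylov_le (K : ℕ) : finrank R (krylov f U K) ≤ K * finrank R U := by
  induction K with
  | zero => simp
  | succ K ih =>
    rw [krylov_succ, add_mul, one_mul, add_comm]
    exact (finrank_add_le_finrank_add_finrank _ _).trans
      (Nat.add_le_add_left ((finrank_map_le f _).trans ih) _)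

theorem min_le_finrank_krylov {t : ℕ} (ht : krylov f U t = ⊤) (K : ℕ) :
    min (finrank R M) (finrank R U + K) ≤ finrank R (krylov f U (K + 1)) := by
  induction K with
  | zero => rw [zero_add, krylov_one, add_zero]; exact min_le_right _ _
  | succ K ih =>
    rcases (krylov_mono f U (Nat.le_add_right (K + 1) 1)).eq_or_lt with heq | hlt
    · have htop : krylov f U (K + 1) = ⊤ :=
        eq_top_iff.2 (ht ▸ krylov_le_of_succ_eq f U heq.symm t)
      rw [← heq, htop, finrank_top]
      exact min_le_left _ _
    · have := Submodule.finrank_lt_finrank_of_lt hlt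
      omega

theorem krylov_finrank_sub_add_one_eq_top {t : ℕ} (ht : krylov f U t = ⊤) :
    krylov f U (finrank R M - finrank R U + 1) = ⊤ := by
  refine eq_top_of_finrank_eq (le_antisymm (finrank_le _) ?_)
  have := min_le_finrank_krylov f U ht (finrank R M - finrank R U)
  have := U.finrank_le
  omega

end Field

end Submodule

section Exchange

variable {𝕜 V ι : Type*} [Field 𝕜] [AddCommGroup V] [Module 𝕜 V] {v : ι → V}

theorem LinearIndepOn.finrank_span_image {T : Finset ι} (h : LinearIndepOn 𝕜 v T) :
    finrank 𝕜 (span 𝕜 (v '' T)) = T.card := by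
  rw [Set.image_eq_range, finrank_span_eq_card h]
  simp

theorem exists_card_eq_span_image_le_and_min_le_finrank [Fintype ι] (v : ι → V)
    (S : Finset ι) :
    ∃ S' : Finset ι, S'.card = S.card ∧ span 𝕜 (v '' S) ≤ span 𝕜 (v '' S') ∧
      min (finrank 𝕜 (span 𝕜 (range v))) S.card ≤ finrank 𝕜 (span 𝕜 (v '' S')) := by
  classical
  -- `v '' b` is a basis of `span (v '' S)` with `b ⊆ S`, extended to a basis `v '' c` of
  -- `span (range v)`; then `S'` is padded from some `T` with `b ⊆ T ⊆ c`.
  have (s : Set ι) : FiniteDimensional 𝕜 (span 𝕜 (v '' s)) :=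
    FiniteDimensional.span_of_finite 𝕜 (toFinite _)
  obtain ⟨b, hbS, -, hSb, hb⟩ :=
    exists_linearIndepOn_extension (linearIndepOn_empty 𝕜 v) (empty_subset (S : Set ι))
  obtain ⟨c, -, hbc, hc_span, hc⟩ := exists_linearIndepOn_extension hb (subset_univ b)
  lift b to Finset ι using S.finite_toSet.subset hbS
  lift c to Finset ι using toFinite c
  rw [Finset.coe_subset] at hbS hbc
  obtain ⟨T, hbT, hTc, hT⟩ := Finset.exists_subsuperset_card_eq hbc
    (le_min (Finset.card_le_card hbc) (Finset.card_le_card hbS)) (min_le_left c.card S.card)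
  obtain ⟨S', hTS', -, hS'⟩ := Finset.exists_subsuperset_card_eq (Finset.subset_univ T)
    (hT.trans_le (min_le_right _ _)) (Finset.card_le_univ S)
  have hc_top : finrank 𝕜 (span 𝕜 (range v)) ≤ c.card := by
    rw [← hc.finrank_span_image, ← image_univ]
    exact Submodule.finrank_mono (span_le.2 hc_span)
  refine ⟨S', hS', span_le.2 (hSb.trans (span_mono (image_mono ?_))), ?_⟩
  · exact Finset.coe_subset.2 (hbT.trans hTS')
  calc min (finrank 𝕜 (span 𝕜 (range v))) S.card ≤ min c.card S.card :=
        min_le_min_right _ hc_top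
    _ = finrank 𝕜 (span 𝕜 (v '' T)) := by
      rw [← hT, (hc.mono (Finset.coe_subset.2 hTc)).finrank_span_image]
    _ ≤ finrank 𝕜 (span 𝕜 (v '' S')) :=
      Submodule.finrank_mono (span_mono (image_mono (Finset.coe_subset.2 hTS')))

end Exchange

namespace Matrix

variable {m n R : Type*}

theorem mulVec_eq_sum_smul_col [Fintype n] [CommSemiring R] (A : Matrix m n R) (g : n → R) :
    A *ᵥ g = ∑ j, g j • A.col j := by
  ext i
  simp [mulVec, dotProduct, mul_comm]

theorem mem_span_col_image_iff [Fintype n] [CommRing R] (A : Matrix m n R) (S : Finset n)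
    {u : m → R} :
    u ∈ span R (A.col '' S) ↔ ∃ g : n → R, (∀ j ∉ S, g j = 0) ∧ A *ᵥ g = u := by
  rw [Finsupp.mem_span_image_iff_linearCombination]
  constructor
  · rintro ⟨l, hl, rfl⟩
    refine ⟨l, (Finsupp.mem_supported' R l).1 hl, ?_⟩
    rw [mulVec_eq_sum_smul_col, Finsupp.linearCombination_apply,
      Finsupp.sum_fintype _ _ (by simp)]
  · rintro ⟨g, hg, rfl⟩
    refine ⟨Finsupp.equivFunOnFinite.symm g,
      (Finsupp.mem_supported' R _).2 (by simpa using hg), ?_⟩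
    rw [mulVec_eq_sum_smul_col, Finsupp.linearCombination_apply,
      Finsupp.sum_fintype _ _ (by simp)]
    simp

variable [Fintype m] [Field R]

theorem finrank_span_col_image_le_rank [Fintype n] (A : Matrix m n R) (S : Set n) :
    finrank R (span R (A.col '' S)) ≤ A.rank := by
  rw [rank_eq_finrank_span_cols]
  exact Submodule.finrank_mono (span_mono (image_subset_range _ _))

theorem finrank_span_col_image_le_card (A : Matrix m n R) (S : Finset n) :
    finrank R (span R (A.col '' S)) ≤ S.card := by
  classical
  rw [← Finset.coe_image]
  exact (finrank_span_finset_le_card _).trans Finset.card_image_le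

theorem natDegree_minpoly_le [DecidableEq m] (A : Matrix m m R) :
    (minpoly R A).natDegree ≤ Fintype.card m := by
  rw [← charpoly_natDegree_eq_dim A]
  exact natDegree_le_of_dvd (minpoly_dvd_charpoly A) A.charpoly_monic.ne_zero

end Matrix

section Steering

variable {N L : ℕ} (D : Matrix (Fin N) (Fin N) ℝ) (H : Matrix (Fin N) (Fin L) ℝ)

noncomputable def steeringMap (K : ℕ) : (Fin K → Fin L → ℝ) →ₗ[ℝ] Fin N → ℝ :=
  ∑ k : Fin K, toLin' (D ^ (K - 1 - (k : ℕ)) * H) ∘ₗ LinearMap.proj k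

theorem steeringMap_apply {K : ℕ} (h : Fin K → Fin L → ℝ) :
    steeringMap D H K h = ∑ k : Fin K, (D ^ (K - 1 - (k : ℕ))) *ᵥ (H *ᵥ h k) := by
  simp only [steeringMap, LinearMap.sum_apply, LinearMap.comp_apply, LinearMap.proj_apply,
    toLin'_apply, mulVec_mulVec]

theorem steers_iff {K : ℕ} {h : Fin K → Fin L → ℝ} {xinit xfinal : Fin N → ℝ} :
    Steers D H K h xinit xfinal ↔ xfinal - (D ^ K) *ᵥ xinit = steeringMap D H K h := by
  rw [Steers, steeringMap_apply]

def supportedInputs (K : ℕ) (S : Finset (Fin L)) : Submodule ℝ (Fin K → Fin L → ℝ) :=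
  pi univ fun _ => pi (↑S)ᶜ fun _ => ⊥

theorem mem_supportedInputs {K : ℕ} {S : Finset (Fin L)} {h : Fin K → Fin L → ℝ} :
    h ∈ supportedInputs K S ↔ ∀ k, ∀ j ∉ S, h k j = 0 := by
  simp [supportedInputs]

theorem map_steeringMap_supportedInputs (K : ℕ) (S : Finset (Fin L)) :
    (supportedInputs K S).map (steeringMap D H K) =
      krylov (toLin' D) (span ℝ (H.col '' S)) K := by
  refine le_antisymm (map_le_iff_le_comap.2 fun h hh => ?_) (krylov_le_iff.2 fun i hi => ?_)
  · rw [mem_comap, steeringMap_apply]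
    refine sum_mem fun k _ => map_pow_le_krylov (i := K - 1 - k) (by omega) ?_
    exact ⟨H *ᵥ h k, (mem_span_col_image_iff H S).2 ⟨h k, mem_supportedInputs.1 hh k, rfl⟩,
      by rw [← toLin'_pow, toLin'_apply]⟩
  · rintro _ ⟨u, hu, rfl⟩
    obtain ⟨g, hg, rfl⟩ := (mem_span_col_image_iff H S).1 hu
    let k₀ : Fin K := ⟨K - 1 - i, by omega⟩
    have hk₀ : K - 1 - (k₀ : ℕ) = i := by simp only [k₀]; omega
    refine ⟨Pi.single k₀ g, mem_supportedInputs.2 fun k j hj => ?_, ?_⟩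
    · rcases eq_or_ne k k₀ with rfl | hk
      · simpa using hg j hj
      · simp [Pi.single_eq_of_ne hk]
    · rw [steeringMap_apply,
        Fintype.sum_eq_single k₀ fun k hk => by simp [Pi.single_eq_of_ne hk],
        Pi.single_eq_same, hk₀, ← toLin'_pow, toLin'_apply]

theorem forall_steers_iff_krylov_eq_top (K : ℕ) (S : Finset (Fin L)) :
    (∀ xinit xfinal : Fin N → ℝ, ∃ h : Fin K → Fin L → ℝ,
      (∀ k, ∀ j ∉ S, h k j = 0) ∧ Steers D H K h xinit xfinal) ↔
    krylov (toLin' D) (span ℝ (H.col '' S)) K = ⊤ := by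
  simp only [← map_steeringMap_supportedInputs, steers_iff, ← mem_supportedInputs]
  constructor
  · refine fun hsteer => eq_top_iff.2 fun y _ => ?_
    obtain ⟨h, hh, hy⟩ := hsteer 0 y
    exact ⟨h, hh, by simpa using hy.symm⟩
  · intro htop xinit xfinal
    obtain ⟨h, hh, hy⟩ := (htop ▸ mem_top : xfinal - (D ^ K) *ᵥ xinit ∈ _)
    exact ⟨h, hh, hy.symm⟩

theorem univCommonSupportSteers_iff {s K : ℕ} :
    UnivCommonSupportSteers N L s D H K ↔
      ∃ S : Finset (Fin L), S.card = s ∧ krylov (toLin' D) (span ℝ (H.col '' S)) K = ⊤ := by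
  simp only [UnivCommonSupportSteers, forall_steers_iff_krylov_eq_top]

theorem krylov_natDegree_minpoly_eq_top {S : Finset (Fin L)}
    (hS : ∀ xinit xfinal : Fin N → ℝ, ∃ K : ℕ, ∃ h : Fin K → Fin L → ℝ,
      (∀ k, ∀ j ∉ S, h k j = 0) ∧ Steers D H K h xinit xfinal) :
    krylov (toLin' D) (span ℝ (H.col '' S)) (minpoly ℝ D).natDegree = ⊤ := by
  refine eq_top_iff.2 fun y _ => ?_
  obtain ⟨K, h, hh, hy⟩ := hS 0 y
  rw [← minpoly_toLin']
  refine krylov_le_krylov_natDegree_minpoly _ _ K ?_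
  rw [← map_steeringMap_supportedInputs]
  exact ⟨h, mem_supportedInputs.2 hh, by simpa using ((steers_iff D H).1 hy).symm⟩

end Steering

theorem min_inputs_common_support_general (N L s : ℕ) (hN : 0 < N)
    (D : Matrix (Fin N) (Fin N) ℝ) (H : Matrix (Fin N) (Fin L) ℝ)
    (hctrl : ∃ S : Finset (Fin L), S.card = s ∧
      ∀ xinit xfinal : Fin N → ℝ, ∃ K : ℕ, 0 < K ∧ ∃ h : Fin K → Fin L → ℝ,
        (∀ k, ∀ j ∉ S, h k j = 0) ∧ Steers D H K h xinit xfinal)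
    (q : ℕ) (hq : q = (minpoly ℝ D).natDegree)
    (R : ℕ) (hR : R = min H.rank s) :
    ∃ K : ℕ, IsLeast {K' : ℕ | 0 < K' ∧ UnivCommonSupportSteers N L s D H K'} K ∧
      N / R ≤ K ∧ K ≤ min q (N - R + 1) ∧ min q (N - R + 1) ≤ N := by
  obtain ⟨S, hScard, hS⟩ := hctrl
  have : Nonempty (Fin N) := ⟨⟨0, hN⟩⟩
  have hSq := krylov_natDegree_minpoly_eq_top D H fun x y => (hS x y).imp fun _ hK => hK.2
  have hqT : q ∈ {K' : ℕ | 0 < K' ∧ UnivCommonSupportSteers N L s D H K'} :=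
    ⟨hq ▸ minpoly.natDegree_pos (Algebra.IsIntegral.isIntegral D),
      (univCommonSupportSteers_iff D H).2 ⟨S, hScard, hq ▸ hSq⟩⟩
  have hleast := isLeast_csInf ⟨q, hqT⟩
  refine ⟨_, hleast, ?_, le_min (hleast.2 hqT) ?_,
    (min_le_left _ _).trans (hq ▸ (natDegree_minpoly_le D).trans_eq (Fintype.card_fin N))⟩
  · obtain ⟨S₁, hS₁card, hS₁⟩ := (univCommonSupportSteers_iff D H).1 hleast.1.2
    have hUR : finrank ℝ (span ℝ (H.col '' S₁)) ≤ R :=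
      hR ▸ hS₁card ▸
        le_min (finrank_span_col_image_le_rank H _) (finrank_span_col_image_le_card H S₁)
    refine Nat.div_le_of_le_mul ?_
    calc N = finrank ℝ (krylov (toLin' D) (span ℝ (H.col '' S₁)) (sInf _)) := by
          rw [hS₁, finrank_top, finrank_fin_fun]
      _ ≤ sInf _ * finrank ℝ (span ℝ (H.col '' S₁)) := finrank_krylov_le _ _ _
      _ ≤ R * sInf _ := by rw [mul_comm]; exact Nat.mul_le_mul_right _ hUR
  · obtain ⟨S', hS'card, hSS', hRS'⟩ :=
      exists_card_eq_span_image_le_and_min_le_finrank (𝕜 := ℝ) H.col S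
    rw [← rank_eq_finrank_span_cols, hScard, ← hR] at hRS'
    have htop := krylov_finrank_sub_add_one_eq_top _ _
      (top_unique (hSq ▸ krylov_mono_right hSS' _))
    rw [finrank_fin_fun] at htop
    calc sInf _ ≤ N - finrank ℝ (span ℝ (H.col '' S')) + 1 :=
          hleast.2 ⟨by omega,
            (univCommonSupportSteers_iff D H).2 ⟨S', hS'card.trans hScard, htop⟩⟩
      _ ≤ N - R + 1 := by omega

/-- For a system controllable using `s`-sparse inputs with a common support, the minimum
number `K*` of such input vectors needed to steer any state to any other satisfies
`N / R* ≤ K* ≤ min{q, N − R* + 1} ≤ N`, where `R* = min{rank H, s}` and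
`q = deg(minpoly D)`. -/
theorem min_inputs_common_support (N L s : ℕ) (hN : 0 < N) (hL : 0 < L) (hs : 0 < s)
    (hsL : s ≤ L)
    (D : Matrix (Fin N) (Fin N) ℝ) (H : Matrix (Fin N) (Fin L) ℝ)
    (hctrl : ∃ S : Finset (Fin L), S.card = s ∧
      ∀ xinit xfinal : Fin N → ℝ, ∃ K : ℕ, 0 < K ∧ ∃ h : Fin K → Fin L → ℝ,
        (∀ k, ∀ j ∉ S, h k j = 0) ∧ Steers D H K h xinit xfinal)
    (q : ℕ) (hq : q = (minpoly ℝ D).natDegree)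
    (R : ℕ) (hR : R = min H.rank s) :
    ∃ K : ℕ, IsLeast {K' : ℕ | 0 < K' ∧ UnivCommonSupportSteers N L s D H K'} K ∧
      N / R ≤ K ∧ K ≤ min q (N - R + 1) ∧ min q (N - R + 1) ≤ N :=
  min_inputs_common_support_general N L s hN D H hctrl q hq R hR
end

section
/- For every positive integer K and every matrix M ∈ 𝓗_K, there exists a matrix M* ∈ 𝓗_K with rank(M*) = R*_K (the maximum rank over 𝓗_K) such that the column space of M is contained in the column space of M*. -/
open Matrix

/-- The family `𝓗_K` of `N × (Ks)` matrices
`[D^{K−1}H_{S_1} | D^{K−2}H_{S_2} | … | H_{S_K}]`, where each index set `S_i ⊆ {1,…,L}`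
has cardinality `s`.  Each such matrix is encoded with columns indexed by
`Fin K × Fin s`, the set `S_k` being given by an injective enumeration
`f k : Fin s → Fin L` of its elements. -/
def KalmanFamily (N L s : ℕ) (D : Matrix (Fin N) (Fin N) ℝ)
    (H : Matrix (Fin N) (Fin L) ℝ) (K : ℕ) : Set (Matrix (Fin N) (Fin K × Fin s) ℝ) :=
  {M | ∃ f : Fin K → Fin s → Fin L, (∀ k, Function.Injective (f k)) ∧
    M = Matrix.of fun (i : Fin N) (p : Fin K × Fin s) =>
      ((D ^ (K - 1 - (p.1 : ℕ))) * H) i (f p.1 p.2)}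

/-- `R*_K`: the maximum rank over the family `𝓗_K`. -/
noncomputable def maxKalmanRank (N L s : ℕ) (D : Matrix (Fin N) (Fin N) ℝ)
    (H : Matrix (Fin N) (Fin L) ℝ) (K : ℕ) : ℕ :=
  sSup (Matrix.rank '' KalmanFamily N L s D H K)

/-! The columns available to members of `𝓗_K` are the vectors `D^{K-1-k} H e_j`, indexed by
pairs `(k, j)`; a member picks `s` indices in each block `k`. Start from a member of maximal
rank and move it towards `M`. A column of `M` outside the current span either joins its block,
if that block has room, or else the block is full and holds an index not used by `M`, which it
replaces. Neither move lowers the rank, and each enlarges the overlap with `M`, so the process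
stops with a column space containing that of `M`; padding every block back to `s` indices
(possible since `s ≤ L`) gives `M*`, whose rank is then maximal. -/

open Submodule Module

section BlockBounded

variable {ι β : Type*} [DecidableEq ι] [DecidableEq β] {π : ι → β} {s : ℕ} {A B : Finset ι}
  {a b : ι}

def BlockBounded (π : ι → β) (s : ℕ) (B : Finset ι) : Prop :=
  ∀ c, (B.filter (π · = c)).card ≤ s

lemma BlockBounded.insert_of_lt (hB : BlockBounded π s B)
    (ha : (B.filter (π · = π a)).card < s) : BlockBounded π s (insert a B) := by
  intro c
  rw [Finset.filter_insert]
  split_ifs with hc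
  · exact (Finset.card_insert_le _ _).trans (hc ▸ ha)
  · exact hB c

lemma BlockBounded.exchange (hB : BlockBounded π s B) (hb : b ∈ B) (hab : π a = π b) :
    BlockBounded π s (insert a (B.erase b)) := by
  intro c
  rw [Finset.filter_insert, Finset.filter_erase]
  split_ifs with hc
  · have hbc : b ∈ B.filter (π · = c) := Finset.mem_filter.2 ⟨hb, hab ▸ hc⟩
    calc _ ≤ ((B.filter (π · = c)).erase b).card + 1 := Finset.card_insert_le _ _
      _ = (B.filter (π · = c)).card := Finset.card_erase_add_one hbc
      _ ≤ s := hB c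
  · exact Finset.card_erase_le.trans (hB c)

lemma BlockBounded.exists_mem_notMem (hA : BlockBounded π s A) (haA : a ∈ A) (haB : a ∉ B)
    (hfull : s ≤ (B.filter (π · = π a)).card) : ∃ b ∈ B, π b = π a ∧ b ∉ A := by
  by_contra! h
  have hsub : insert a (B.filter (π · = π a)) ⊆ A.filter (π · = π a) := by
    intro x hx
    rcases Finset.mem_insert.1 hx with rfl | hx
    · exact Finset.mem_filter.2 ⟨haA, rfl⟩
    · obtain ⟨hxB, hxa⟩ := Finset.mem_filter.1 hx
      exact Finset.mem_filter.2 ⟨h x hxB hxa, hxa⟩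
  have hcard := Finset.card_le_card hsub
  rw [Finset.card_insert_of_notMem fun h => haB (Finset.mem_filter.1 h).1] at hcard
  have := hA (π a)
  omega

end BlockBounded

section Span

variable {ι 𝕜 V : Type*} [DecidableEq ι] [Field 𝕜] [AddCommGroup V] [Module 𝕜 V]
  [FiniteDimensional 𝕜 V] (v : ι → V) {B : Finset ι} {a b : ι}

lemma finrank_span_image_lt_insert (ha : v a ∉ span 𝕜 (v '' B)) :
    finrank 𝕜 (span 𝕜 (v '' B)) < finrank 𝕜 (span 𝕜 (v '' ↑(insert a B))) := by
  refine finrank_lt_finrank_of_lt (lt_of_le_of_ne (span_mono ?_) fun h => ha ?_)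
  · exact Set.image_mono (by simp)
  · exact h ▸ subset_span ⟨a, by simp, rfl⟩

lemma finrank_span_image_le_exchange (ha : v a ∉ span 𝕜 (v '' B)) :
    finrank 𝕜 (span 𝕜 (v '' B)) ≤ finrank 𝕜 (span 𝕜 (v '' ↑(insert a (B.erase b)))) := by
  have hsingle : finrank 𝕜 (𝕜 ∙ v b) ≤ 1 := by
    simpa using finrank_span_le_card ({v b} : Set V)
  have herase : finrank 𝕜 (span 𝕜 (v '' B)) ≤ finrank 𝕜 (span 𝕜 (v '' ↑(B.erase b))) + 1 :=
    calc finrank 𝕜 (span 𝕜 (v '' B))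
        ≤ finrank 𝕜 ((𝕜 ∙ v b) ⊔ span 𝕜 (v '' ↑(B.erase b)) : Submodule 𝕜 V) := by
          rw [← Set.image_singleton, ← span_union, ← Set.image_union]
          exact finrank_mono (span_mono (Set.image_mono (by simp)))
      _ ≤ finrank 𝕜 (𝕜 ∙ v b) + finrank 𝕜 (span 𝕜 (v '' ↑(B.erase b))) :=
          finrank_add_le_finrank_add_finrank _ _
      _ ≤ _ := by omega
  have ha' : v a ∉ span 𝕜 (v '' ↑(B.erase b)) :=
    fun h => ha (span_mono (Set.image_mono (by simp)) h)
  have := finrank_span_image_lt_insert v ha'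
  omega

end Span

section Exchange

variable {ι β 𝕜 V : Type*} [DecidableEq ι] [DecidableEq β] [Field 𝕜] [AddCommGroup V]
  [Module 𝕜 V] [FiniteDimensional 𝕜 V] (v : ι → V) {π : ι → β} {s : ℕ} {A : Finset ι}

theorem BlockBounded.exists_span_le (hA : BlockBounded π s A) {B : Finset ι}
    (hB : BlockBounded π s B) :
    ∃ C, BlockBounded π s C ∧ finrank 𝕜 (span 𝕜 (v '' B)) ≤ finrank 𝕜 (span 𝕜 (v '' C)) ∧
      span 𝕜 (v '' A) ≤ span 𝕜 (v '' C) := by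
  induction hn : (A \ B).card using Nat.strong_induction_on generalizing B with
  | _ n ih =>
  by_cases hAB : span 𝕜 (v '' A) ≤ span 𝕜 (v '' B)
  · exact ⟨B, hB, le_rfl, hAB⟩
  obtain ⟨a, haA, ha⟩ : ∃ a ∈ A, v a ∉ span 𝕜 (v '' B) := by
    simpa [span_le, Set.subset_def] using hAB
  have haB : a ∉ B := fun h => ha (subset_span (Set.mem_image_of_mem v h))
  obtain ⟨B', hB', hrank, hsdiff⟩ : ∃ B', BlockBounded π s B' ∧
      finrank 𝕜 (span 𝕜 (v '' B)) ≤ finrank 𝕜 (span 𝕜 (v '' B')) ∧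
      A \ B' = (A \ B).erase a := by
    by_cases hfree : (B.filter (π · = π a)).card < s
    · exact ⟨insert a B, hB.insert_of_lt hfree, (finrank_span_image_lt_insert v ha).le,
        Finset.sdiff_insert _ _ _⟩
    obtain ⟨b, hbB, hba, hbA⟩ := hA.exists_mem_notMem haA haB (not_lt.1 hfree)
    refine ⟨insert a (B.erase b), hB.exchange hbB hba.symm,
      finrank_span_image_le_exchange v ha, ?_⟩
    ext x
    simp only [Finset.mem_sdiff, Finset.mem_insert, Finset.mem_erase]
    grind
  have hlt : (A \ B').card < n := by
    rw [← hn, hsdiff]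
    exact Finset.card_erase_lt_of_mem (Finset.mem_sdiff.2 ⟨haA, haB⟩)
  obtain ⟨C, hC, hrankC, hAC⟩ := ih _ hlt hB' rfl
  exact ⟨C, hC, hrank.trans hrankC, hAC⟩

end Exchange

section Kalman

variable {N L s K : ℕ} (D : Matrix (Fin N) (Fin N) ℝ) (H : Matrix (Fin N) (Fin L) ℝ)

def kalmanColumn (K : ℕ) (p : Fin K × Fin L) : Fin N → ℝ :=
  (D ^ (K - 1 - (p.1 : ℕ)) * H).col p.2

def kalmanMatrix (g : Fin K → Fin s → Fin L) : Matrix (Fin N) (Fin K × Fin s) ℝ :=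
  Matrix.of fun i p => ((D ^ (K - 1 - (p.1 : ℕ))) * H) i (g p.1 p.2)

def selectionSupport (g : Fin K → Fin s → Fin L) : Finset (Fin K × Fin L) :=
  Finset.univ.image fun q : Fin K × Fin s => (q.1, g q.1 q.2)

lemma mem_kalmanFamily_iff {M : Matrix (Fin N) (Fin K × Fin s) ℝ} :
    M ∈ KalmanFamily N L s D H K ↔
      ∃ g : Fin K → Fin s → Fin L, (∀ k, Function.Injective (g k)) ∧ M = kalmanMatrix D H g :=
  Iff.rfl

lemma blockBounded_selectionSupport (g : Fin K → Fin s → Fin L) :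
    BlockBounded Prod.fst s (selectionSupport g) := by
  intro k
  calc ((selectionSupport g).filter (·.1 = k)).card
      ≤ (Finset.univ.image fun j => (k, g k j)).card := by
        refine Finset.card_le_card fun p hp => ?_
        obtain ⟨hpg, rfl⟩ := Finset.mem_filter.1 hp
        obtain ⟨q, -, rfl⟩ := Finset.mem_image.1 hpg
        exact Finset.mem_image_of_mem _ (Finset.mem_univ q.2)
    _ ≤ s := Finset.card_image_le.trans (by simp)

lemma range_kalmanMatrix (g : Fin K → Fin s → Fin L) :
    LinearMap.range (kalmanMatrix D H g).mulVecLin =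
      span ℝ (kalmanColumn D H K '' selectionSupport g) := by
  rw [Matrix.range_mulVecLin, selectionSupport, Finset.coe_image, Finset.coe_univ,
    Set.image_univ, ← Set.range_comp]
  rfl

lemma rank_kalmanMatrix (g : Fin K → Fin s → Fin L) :
    (kalmanMatrix D H g).rank = finrank ℝ (span ℝ (kalmanColumn D H K '' selectionSupport g)) :=
  congrArg (fun W : Submodule ℝ (Fin N → ℝ) => finrank ℝ W) (range_kalmanMatrix D H g)

lemma exists_selectionSupport_superset (hsL : s ≤ L) {C : Finset (Fin K × Fin L)}
    (hC : BlockBounded Prod.fst s C) :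
    ∃ g : Fin K → Fin s → Fin L, (∀ k, Function.Injective (g k)) ∧ C ⊆ selectionSupport g := by
  have hT : ∀ k, ∃ T : Finset (Fin L), (C.filter (·.1 = k)).image Prod.snd ⊆ T ∧ T.card = s :=
    fun k => Finset.exists_superset_card_eq (Finset.card_image_le.trans (hC k)) (by simpa)
  choose T hCT hTs using hT
  refine ⟨fun k => (T k).orderEmbOfFin (hTs k),
    fun k => ((T k).orderEmbOfFin (hTs k)).injective, ?_⟩
  rintro ⟨k, j⟩ hkj
  have hj : j ∈ Set.range ((T k).orderEmbOfFin (hTs k)) := by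
    rw [Finset.range_orderEmbOfFin]
    exact hCT k (Finset.mem_image.2 ⟨(k, j), Finset.mem_filter.2 ⟨hkj, rfl⟩, rfl⟩)
  obtain ⟨i, rfl⟩ := hj
  exact Finset.mem_image_of_mem _ (Finset.mem_univ (k, i))

lemma bddAbove_rank_kalmanFamily : BddAbove (Matrix.rank '' KalmanFamily N L s D H K) :=
  ⟨N, by rintro _ ⟨M, -, rfl⟩; simpa using M.rank_le_card_height⟩

lemma rank_le_maxKalmanRank {M : Matrix (Fin N) (Fin K × Fin s) ℝ}
    (hM : M ∈ KalmanFamily N L s D H K) : M.rank ≤ maxKalmanRank N L s D H K :=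
  le_csSup (bddAbove_rank_kalmanFamily D H) ⟨M, hM, rfl⟩

lemma exists_rank_kalmanMatrix_eq_maxKalmanRank (hne : (KalmanFamily N L s D H K).Nonempty) :
    ∃ g : Fin K → Fin s → Fin L, (kalmanMatrix D H g).rank = maxKalmanRank N L s D H K := by
  obtain ⟨M, hM, hrank⟩ := Nat.sSup_mem (hne.image _) (bddAbove_rank_kalmanFamily D H)
  obtain ⟨g, -, rfl⟩ := (mem_kalmanFamily_iff D H).1 hM
  exact ⟨g, hrank⟩

end Kalman

theorem exists_max_rank_dominating_general (N L s : ℕ)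
    (hsL : s ≤ L)
    (D : Matrix (Fin N) (Fin N) ℝ) (H : Matrix (Fin N) (Fin L) ℝ) :
    ∀ K : ℕ, 0 < K → ∀ M ∈ KalmanFamily N L s D H K,
      ∃ Mstar ∈ KalmanFamily N L s D H K,
        Mstar.rank = maxKalmanRank N L s D H K ∧
        LinearMap.range M.mulVecLin ≤ LinearMap.range Mstar.mulVecLin := by
  intro K _ M hM
  obtain ⟨g₀, hg₀⟩ := exists_rank_kalmanMatrix_eq_maxKalmanRank D H ⟨M, hM⟩
  obtain ⟨f, -, rfl⟩ := (mem_kalmanFamily_iff D H).1 hM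
  obtain ⟨C, hC, hrank, hspan⟩ := (blockBounded_selectionSupport f).exists_span_le (𝕜 := ℝ)
    (kalmanColumn D H K) (blockBounded_selectionSupport g₀)
  obtain ⟨g, hg, hCg⟩ := exists_selectionSupport_superset hsL hC
  have hCg' : span ℝ (kalmanColumn D H K '' C) ≤
      span ℝ (kalmanColumn D H K '' selectionSupport g) :=
    span_mono (Set.image_mono hCg)
  have hgK : kalmanMatrix D H g ∈ KalmanFamily N L s D H K :=
    (mem_kalmanFamily_iff D H).2 ⟨g, hg, rfl⟩
  refine ⟨kalmanMatrix D H g, hgK, (rank_le_maxKalmanRank D H hgK).antisymm ?_, ?_⟩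
  · rw [← hg₀, rank_kalmanMatrix, rank_kalmanMatrix]
    exact hrank.trans (finrank_mono hCg')
  · rw [range_kalmanMatrix, range_kalmanMatrix]
    exact hspan.trans hCg'

/-- For every `K` and every `M ∈ 𝓗_K`, there is `M* ∈ 𝓗_K` of maximum rank `R*_K`
whose column space contains the column space of `M`. -/
theorem exists_max_rank_dominating (N L s : ℕ) (hN : 0 < N) (hL : 0 < L) (hs : 0 < s)
    (hsL : s ≤ L)
    (D : Matrix (Fin N) (Fin N) ℝ) (H : Matrix (Fin N) (Fin L) ℝ) :
    ∀ K : ℕ, 0 < K → ∀ M ∈ KalmanFamily N L s D H K,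
      ∃ Mstar ∈ KalmanFamily N L s D H K,
        Mstar.rank = maxKalmanRank N L s D H K ∧
        LinearMap.range M.mulVecLin ≤ LinearMap.range Mstar.mulVecLin :=
  exists_max_rank_dominating_general N L s hsL D H
end

section
/- If K is a positive integer with R*_K = R*_{K+1}, then R*_{K+Q} = R*_K for every positive integer Q; moreover, under the same hypothesis, for every matrix M* ∈ 𝓗_K with rank(M*) = R*_K, every column of D^K H lies in the column space of M*, i.e., rank[D^K H | M*] = rank(M*). -/
open Matrix

/-!
A member of `𝓗_m` picks `s` columns from each block `D ^ (m - 1 - k) * H`; write `V(σ)` for the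
column space of the selection `σ`.

Exchange: every `V(σ)` lies inside `V(τ)` for some `τ` of maximal rank. Take `τ` of maximal rank
sharing the most columns with `σ`; a column of `σ` outside `V(τ)` could replace a column of `τ` not
in `σ` without lowering the rank, sharing one column more.

If `R*_{m+1} ≤ R*_m`, prepending a block of `D ^ m * H` to a maximal-rank `τ` cannot enlarge
`V(τ)`, so every column of `D ^ m * H` lies in `V(τ)`: this is the second claim. It also propagates
saturation: a selection at level `m + 2` has the form `[D * [D ^ m * H_S₀ | B] | H_S]`; by exchange
`V(B) ≤ V(τ)` with `τ` maximal at level `m`, which absorbs `D ^ m * H_S₀` too, so the selection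
spans at most `V([D * τ | H_S])`, of rank at most `R*_{m+1}`.
-/

open Module Submodule Finset

section Exchange

variable {𝕜 E : Type*} [Field 𝕜] [AddCommGroup E] [Module 𝕜 E] [FiniteDimensional 𝕜 E]

lemma Submodule.finrank_sup_span_singleton_le (W : Submodule 𝕜 E) (u : E) :
    finrank 𝕜 ↥(W ⊔ span 𝕜 {u}) ≤ finrank 𝕜 W + 1 := by
  by_cases hu : u ∈ W
  · rw [sup_eq_left.2 ((span_singleton_le_iff_mem u W).2 hu)]
    exact Nat.le_succ _
  · rw [finrank_sup_span_singleton hu]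

lemma Submodule.finrank_le_of_exchange {W A B : Submodule 𝕜 E} {u v : E}
    (hA : A ≤ W ⊔ span 𝕜 {u}) (hB : W ⊔ span 𝕜 {v} ≤ B) (hv : v ∉ W) :
    finrank 𝕜 A ≤ finrank 𝕜 B :=
  calc finrank 𝕜 A ≤ finrank 𝕜 ↥(W ⊔ span 𝕜 {u}) := finrank_mono hA
    _ ≤ finrank 𝕜 W + 1 := W.finrank_sup_span_singleton_le u
    _ = finrank 𝕜 ↥(W ⊔ span 𝕜 {v}) := (finrank_sup_span_singleton hv).symm
    _ ≤ finrank 𝕜 B := finrank_mono hB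

end Exchange

section BlockSelection

variable (𝕜 : Type*) {E ι κ : Type*} [Field 𝕜] [AddCommGroup E] [Module 𝕜 E]

def blockSpan (c : ι → κ → E) (S : ι → Finset κ) : Submodule 𝕜 E :=
  span 𝕜 ((fun p : ι × κ => c p.1 p.2) '' {p | p.2 ∈ S p.1})

variable {𝕜}

def blockSelections [Fintype ι] [DecidableEq ι] [Fintype κ] (s : ℕ) : Finset (ι → Finset κ) :=
  {S | ∀ i, #(S i) = s}

variable (𝕜) in
noncomputable def maxBlockRank [Fintype ι] [DecidableEq ι] [Fintype κ] (c : ι → κ → E) (s : ℕ) :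
    ℕ :=
  (blockSelections s).sup fun S => finrank 𝕜 (blockSpan 𝕜 c S)

variable {c : ι → κ → E}

lemma subset_blockSpan {S : ι → Finset κ} {i : ι} {j : κ} (hj : j ∈ S i) :
    c i j ∈ blockSpan 𝕜 c S :=
  subset_span ⟨(i, j), hj, rfl⟩

lemma blockSpan_mono {S T : ι → Finset κ} (h : ∀ i, S i ⊆ T i) :
    blockSpan 𝕜 c S ≤ blockSpan 𝕜 c T :=
  span_mono (Set.image_mono fun p hp => h p.1 hp)

lemma blockSpan_update_insert [DecidableEq ι] [DecidableEq κ] (S : ι → Finset κ) (i : ι) (j : κ)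
    (T : Finset κ) :
    blockSpan 𝕜 c (Function.update S i (insert j T)) =
      span 𝕜 {c i j} ⊔ blockSpan 𝕜 c (Function.update S i T) := by
  have hcells : {p : ι × κ | p.2 ∈ Function.update S i (insert j T) p.1} =
      insert (i, j) {p | p.2 ∈ Function.update S i T p.1} := by
    ext ⟨i', j'⟩
    by_cases hi : i' = i
    · subst hi; simp
    · simp [hi]
  rw [blockSpan, hcells, Set.image_insert_eq, span_insert, blockSpan]

lemma finrank_blockSpan_le_update_insert_erase [DecidableEq ι] [DecidableEq κ]
    [FiniteDimensional 𝕜 E] {τ : ι → Finset κ} {i : ι} {u j : κ} (hu : u ∈ τ i)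
    (hj : c i j ∉ blockSpan 𝕜 c τ) :
    finrank 𝕜 (blockSpan 𝕜 c τ) ≤
      finrank 𝕜 (blockSpan 𝕜 c (Function.update τ i (insert j ((τ i).erase u)))) := by
  set W := blockSpan 𝕜 c (Function.update τ i ((τ i).erase u))
  have hτ : blockSpan 𝕜 c τ = span 𝕜 {c i u} ⊔ W := by
    have h : τ = Function.update τ i (insert u ((τ i).erase u)) := by
      rw [insert_erase hu, Function.update_eq_self]
    calc blockSpan 𝕜 c τ = blockSpan 𝕜 c (Function.update τ i (insert u ((τ i).erase u))) :=
          congrArg _ h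
      _ = span 𝕜 {c i u} ⊔ W := blockSpan_update_insert τ i u _
  have hW : W ≤ blockSpan 𝕜 c τ := blockSpan_mono fun i' => by
    rw [Function.update_apply]
    split_ifs with hi
    · exact hi ▸ erase_subset u (τ i)
    · exact subset_rfl
  refine finrank_le_of_exchange (W := W) (hτ.trans_le (sup_comm _ _).le) ?_ (fun h => hj (hW h))
  rw [blockSpan_update_insert, sup_comm]

section Overlap

variable [Fintype ι] [DecidableEq ι] [DecidableEq κ]

def overlap (σ τ : ι → Finset κ) : ℕ :=
  ∑ i, #(σ i ∩ τ i)

lemma overlap_lt_update_insert_erase {σ τ : ι → Finset κ} {i : ι} {u j : κ}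
    (huσ : u ∉ σ i) (hjσ : j ∈ σ i) (hjτ : j ∉ τ i) :
    overlap σ τ < overlap σ (Function.update τ i (insert j ((τ i).erase u))) := by
  have hsub : σ i ∩ τ i ⊂ σ i ∩ insert j ((τ i).erase u) := by
    refine (ssubset_iff_of_subset fun x hx => ?_).2 ⟨j, by simp [hjσ], by simp [hjτ]⟩
    obtain ⟨hxσ, hxτ⟩ := mem_inter.1 hx
    exact mem_inter.2 ⟨hxσ, mem_insert_of_mem (mem_erase.2 ⟨fun h => huσ (h ▸ hxσ), hxτ⟩)⟩
  refine sum_lt_sum (fun i' _ => ?_) ⟨i, mem_univ i, by simpa using card_lt_card hsub⟩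
  by_cases hi : i' = i
  · subst hi; simpa using (card_lt_card hsub).le
  · simp [hi]

end Overlap

section Finite

variable [Fintype ι] [DecidableEq ι] [Fintype κ]

lemma mem_blockSelections {s : ℕ} {S : ι → Finset κ} :
    S ∈ blockSelections s ↔ ∀ i, #(S i) = s := by
  simp [blockSelections]

lemma blockSelections_nonempty {s : ℕ} (hs : s ≤ Fintype.card κ) :
    (blockSelections (ι := ι) (κ := κ) s).Nonempty := by
  obtain ⟨T, -, hT⟩ := exists_subset_card_eq (s := (univ : Finset κ)) hs
  exact ⟨fun _ => T, mem_blockSelections.2 fun _ => hT⟩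

lemma finrank_le_maxBlockRank {s : ℕ} {S : ι → Finset κ} (hS : S ∈ blockSelections s) :
    finrank 𝕜 (blockSpan 𝕜 c S) ≤ maxBlockRank 𝕜 c s :=
  le_sup (f := fun S => finrank 𝕜 (blockSpan 𝕜 c S)) hS

lemma exists_finrank_eq_maxBlockRank {s : ℕ} (h : (blockSelections (ι := ι) (κ := κ) s).Nonempty) :
    ∃ S ∈ blockSelections s, finrank 𝕜 (blockSpan 𝕜 c S) = maxBlockRank 𝕜 c s := by
  obtain ⟨S, hS, hsup⟩ := exists_mem_eq_sup _ h fun S => finrank 𝕜 (blockSpan 𝕜 c S)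
  exact ⟨S, hS, hsup.symm⟩

variable [DecidableEq κ]

lemma update_insert_erase_mem_blockSelections {s : ℕ} {τ : ι → Finset κ}
    (hτ : τ ∈ blockSelections s) {i : ι} {u j : κ} (hu : u ∈ τ i) (hj : j ∉ τ i) :
    Function.update τ i (insert j ((τ i).erase u)) ∈ blockSelections s := by
  rw [mem_blockSelections] at hτ ⊢
  intro i'
  by_cases hi : i' = i
  · subst hi
    rw [Function.update_self, card_insert_of_notMem (fun h => hj (mem_of_mem_erase h)),
      card_erase_of_mem hu, hτ, Nat.sub_add_cancel]
    exact hτ i' ▸ card_pos.2 ⟨u, hu⟩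
  · rw [Function.update_of_ne hi, hτ]

theorem exists_maxBlockRank_blockSpan_le [FiniteDimensional 𝕜 E] {s : ℕ} {σ : ι → Finset κ}
    (hσ : σ ∈ blockSelections s) :
    ∃ τ ∈ blockSelections s, finrank 𝕜 (blockSpan 𝕜 c τ) = maxBlockRank 𝕜 c s ∧
      blockSpan 𝕜 c σ ≤ blockSpan 𝕜 c τ := by
  obtain ⟨τ₀, hτ₀, hτ₀max⟩ := exists_finrank_eq_maxBlockRank (𝕜 := 𝕜) (c := c) ⟨σ, hσ⟩
  obtain ⟨τ, hτ, hτbest⟩ := exists_max_image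
    ({τ ∈ blockSelections s | finrank 𝕜 (blockSpan 𝕜 c τ) = maxBlockRank 𝕜 c s} :
      Finset (ι → Finset κ))
    (overlap σ) ⟨τ₀, mem_filter.2 ⟨hτ₀, hτ₀max⟩⟩
  obtain ⟨hτsel, hτmax⟩ := mem_filter.1 hτ
  refine ⟨τ, hτsel, hτmax, span_le.2 ?_⟩
  rintro _ ⟨⟨i, j⟩, hjσ, rfl⟩
  by_contra hj
  have hjτ : j ∉ τ i := fun h => hj (subset_blockSpan h)
  obtain ⟨u, hu, huσ⟩ : ∃ u ∈ τ i, u ∉ σ i := by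
    have hcard : #(τ i \ σ i) = #(σ i \ τ i) :=
      card_sdiff_comm ((mem_blockSelections.1 hτsel i).trans (mem_blockSelections.1 hσ i).symm)
    obtain ⟨u, hu⟩ := card_pos.1 (hcard ▸ card_pos.2 ⟨j, mem_sdiff.2 ⟨hjσ, hjτ⟩⟩)
    exact ⟨u, (mem_sdiff.1 hu).1, (mem_sdiff.1 hu).2⟩
  have hsel := update_insert_erase_mem_blockSelections hτsel hu hjτ
  have hmax : finrank 𝕜 (blockSpan 𝕜 c (Function.update τ i (insert j ((τ i).erase u)))) =
      maxBlockRank 𝕜 c s :=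
    (finrank_le_maxBlockRank hsel).antisymm
      (hτmax ▸ finrank_blockSpan_le_update_insert_erase hu hj)
  exact (hτbest _ (mem_filter.2 ⟨hsel, hmax⟩)).not_gt
    (overlap_lt_update_insert_erase huσ hjσ hjτ)

end Finite

end BlockSelection

section FinBlocks

variable {𝕜 E κ : Type*} [Field 𝕜] [AddCommGroup E] [Module 𝕜 E] {m : ℕ}

lemma blockSpan_cons (c : Fin (m + 1) → κ → E) (T : Finset κ) (S : Fin m → Finset κ) :
    blockSpan 𝕜 c (Fin.cons T S) = span 𝕜 (c 0 '' T) ⊔ blockSpan 𝕜 (fun k => c k.succ) S := by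
  rw [blockSpan, blockSpan, ← span_union]
  congr 1
  ext v
  simp [Fin.exists_fin_succ]

lemma blockSpan_snoc (c : Fin (m + 1) → κ → E) (S : Fin m → Finset κ) (T : Finset κ) :
    blockSpan 𝕜 c (Fin.snoc S T) =
      blockSpan 𝕜 (fun k => c k.castSucc) S ⊔ span 𝕜 (c (Fin.last m) '' T) := by
  rw [blockSpan, blockSpan, ← span_union]
  congr 1
  ext v
  simp [Fin.exists_fin_succ', or_comm]

lemma blockSpan_map {F : Type*} [AddCommGroup F] [Module 𝕜 F] (f : E →ₗ[𝕜] F) {ι : Type*}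
    (c : ι → κ → E) (S : ι → Finset κ) :
    blockSpan 𝕜 (fun i j => f (c i j)) S = (blockSpan 𝕜 c S).map f := by
  rw [blockSpan, blockSpan, map_span, Set.image_image]

variable [Fintype κ]

lemma cons_mem_blockSelections {s : ℕ} {T : Finset κ} {S : Fin m → Finset κ} :
    (Fin.cons T S : Fin (m + 1) → Finset κ) ∈ blockSelections s ↔
      #T = s ∧ S ∈ blockSelections s := by
  simp [mem_blockSelections, Fin.forall_fin_succ]

lemma snoc_mem_blockSelections {s : ℕ} {S : Fin m → Finset κ} {T : Finset κ} :
    (Fin.snoc S T : Fin (m + 1) → Finset κ) ∈ blockSelections s ↔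
      S ∈ blockSelections s ∧ #T = s := by
  simp [mem_blockSelections, Fin.forall_fin_succ']

end FinBlocks

section Kalman

variable {𝕜 n l : Type*} [Field 𝕜] [Fintype n] [DecidableEq n] (D : Matrix n n 𝕜)
  (H : Matrix n l 𝕜) {m : ℕ}

/-- Block `k` of the Kalman matrix `[D ^ (m - 1) * H | … | D * H | H]`, numbered from the
left as in `KalmanFamily`. -/
def kalmanCol (m : ℕ) (k : Fin m) : l → n → 𝕜 :=
  (D ^ (m - 1 - k) * H).col

lemma kalmanCol_zero : kalmanCol D H (m + 1) 0 = (D ^ m * H).col := by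
  simp [kalmanCol]

lemma kalmanCol_succ (k : Fin m) : kalmanCol D H (m + 1) k.succ = kalmanCol D H m k := by
  simp only [kalmanCol, Fin.val_succ]
  congr 3
  omega

lemma kalmanCol_last : kalmanCol D H (m + 1) (Fin.last m) = H.col := by
  simp [kalmanCol]

lemma kalmanCol_castSucc (k : Fin m) (j : l) :
    kalmanCol D H (m + 1) k.castSucc j = D *ᵥ kalmanCol D H m k j := by
  have h : m + 1 - 1 - k = m - 1 - k + 1 := by omega
  simp only [kalmanCol, Fin.val_castSucc, h, pow_succ', Matrix.mul_assoc]
  rfl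

lemma blockSpan_kalmanCol_cons (T : Finset l) (S : Fin m → Finset l) :
    blockSpan 𝕜 (kalmanCol D H (m + 1)) (Fin.cons T S) =
      span 𝕜 ((D ^ m * H).col '' T) ⊔ blockSpan 𝕜 (kalmanCol D H m) S := by
  rw [blockSpan_cons, kalmanCol_zero]
  simp only [kalmanCol_succ]

lemma blockSpan_kalmanCol_snoc (S : Fin m → Finset l) (T : Finset l) :
    blockSpan 𝕜 (kalmanCol D H (m + 1)) (Fin.snoc S T) =
      (blockSpan 𝕜 (kalmanCol D H m) S).map D.mulVecLin ⊔ span 𝕜 (H.col '' T) := by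
  have hcast : (fun k : Fin m => kalmanCol D H (m + 1) k.castSucc) =
      fun k j => D.mulVecLin (kalmanCol D H m k j) :=
    funext fun k => funext (kalmanCol_castSucc D H k)
  rw [blockSpan_snoc, kalmanCol_last, hcast, blockSpan_map]

variable [Fintype l] {s : ℕ}

lemma maxBlockRank_kalmanCol_le_succ (hsL : s ≤ Fintype.card l) :
    maxBlockRank 𝕜 (kalmanCol D H m) s ≤ maxBlockRank 𝕜 (kalmanCol D H (m + 1)) s := by
  obtain ⟨τ, hτ, hτmax⟩ := exists_finrank_eq_maxBlockRank (𝕜 := 𝕜) (c := kalmanCol D H m)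
    (blockSelections_nonempty hsL)
  obtain ⟨T, -, hT⟩ := exists_subset_card_eq (s := (univ : Finset l)) hsL
  calc maxBlockRank 𝕜 (kalmanCol D H m) s = finrank 𝕜 (blockSpan 𝕜 (kalmanCol D H m) τ) :=
        hτmax.symm
    _ ≤ finrank 𝕜 (blockSpan 𝕜 (kalmanCol D H (m + 1)) (Fin.cons T τ)) := by
        rw [blockSpan_kalmanCol_cons]
        exact finrank_mono le_sup_right
    _ ≤ _ := finrank_le_maxBlockRank (cons_mem_blockSelections.2 ⟨hT, hτ⟩)

lemma span_range_col_le_blockSpan (hs : 0 < s) (hsL : s ≤ Fintype.card l)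
    (hR : maxBlockRank 𝕜 (kalmanCol D H (m + 1)) s ≤ maxBlockRank 𝕜 (kalmanCol D H m) s)
    {τ : Fin m → Finset l} (hτ : τ ∈ blockSelections s)
    (hτmax : finrank 𝕜 (blockSpan 𝕜 (kalmanCol D H m) τ) = maxBlockRank 𝕜 (kalmanCol D H m) s) :
    span 𝕜 (Set.range (D ^ m * H).col) ≤ blockSpan 𝕜 (kalmanCol D H m) τ := by
  refine span_le.2 ?_
  rintro _ ⟨j, rfl⟩
  obtain ⟨T, hjT, -, hT⟩ :=
    exists_subsuperset_card_eq (subset_univ {j}) ((card_singleton j).trans_le hs) hsL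
  have hle : blockSpan 𝕜 (kalmanCol D H m) τ ≤ blockSpan 𝕜 (kalmanCol D H (m + 1)) (Fin.cons T τ) :=
    (blockSpan_kalmanCol_cons D H T τ).symm ▸ le_sup_right
  have heq := eq_of_le_of_finrank_le hle (hτmax ▸
    (finrank_le_maxBlockRank (cons_mem_blockSelections.2 ⟨hT, hτ⟩)).trans hR)
  rw [heq, blockSpan_kalmanCol_cons]
  exact mem_sup_left (subset_span ⟨j, singleton_subset_iff.1 hjT, rfl⟩)

variable [DecidableEq l]

lemma exists_blockSpan_kalmanCol_succ_le (hs : 0 < s) (hsL : s ≤ Fintype.card l)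
    (hR : maxBlockRank 𝕜 (kalmanCol D H (m + 1)) s ≤ maxBlockRank 𝕜 (kalmanCol D H m) s)
    {B : Fin (m + 1) → Finset l} (hB : B ∈ blockSelections s) :
    ∃ τ ∈ blockSelections s,
      blockSpan 𝕜 (kalmanCol D H (m + 1)) B ≤ blockSpan 𝕜 (kalmanCol D H m) τ := by
  rw [← Fin.cons_self_tail B] at hB ⊢
  obtain ⟨τ, hτ, hτmax, hle⟩ := exists_maxBlockRank_blockSpan_le (𝕜 := 𝕜)
    (c := kalmanCol D H m) (cons_mem_blockSelections.1 hB).2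
  refine ⟨τ, hτ, ?_⟩
  rw [blockSpan_kalmanCol_cons]
  exact sup_le ((span_mono (Set.image_subset_range _ _)).trans
    (span_range_col_le_blockSpan D H hs hsL hR hτ hτmax)) hle

lemma maxBlockRank_kalmanCol_succ_succ_le (hs : 0 < s) (hsL : s ≤ Fintype.card l)
    (hR : maxBlockRank 𝕜 (kalmanCol D H (m + 1)) s ≤ maxBlockRank 𝕜 (kalmanCol D H m) s) :
    maxBlockRank 𝕜 (kalmanCol D H (m + 2)) s ≤ maxBlockRank 𝕜 (kalmanCol D H (m + 1)) s := by
  obtain ⟨σ, hσ, hσmax⟩ := exists_finrank_eq_maxBlockRank (𝕜 := 𝕜)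
    (c := kalmanCol D H (m + 2)) (blockSelections_nonempty hsL)
  rw [← Fin.snoc_init_self σ] at hσ hσmax
  obtain ⟨hinit, hlast⟩ := snoc_mem_blockSelections.1 hσ
  obtain ⟨τ, hτ, hle⟩ := exists_blockSpan_kalmanCol_succ_le D H hs hsL hR hinit
  calc maxBlockRank 𝕜 (kalmanCol D H (m + 2)) s = _ := hσmax.symm
    _ ≤ finrank 𝕜 (blockSpan 𝕜 (kalmanCol D H (m + 1)) (Fin.snoc τ (σ (Fin.last (m + 1))))) := by
        rw [blockSpan_kalmanCol_snoc, blockSpan_kalmanCol_snoc]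
        exact finrank_mono (sup_le_sup_right (map_mono hle) _)
    _ ≤ _ := finrank_le_maxBlockRank (snoc_mem_blockSelections.2 ⟨hτ, hlast⟩)

theorem maxBlockRank_kalmanCol_add (hs : 0 < s) (hsL : s ≤ Fintype.card l)
    (hsat : maxBlockRank 𝕜 (kalmanCol D H (m + 1)) s = maxBlockRank 𝕜 (kalmanCol D H m) s)
    (q : ℕ) :
    maxBlockRank 𝕜 (kalmanCol D H (m + q)) s = maxBlockRank 𝕜 (kalmanCol D H m) s := by
  have hstep : ∀ q, maxBlockRank 𝕜 (kalmanCol D H (m + q + 1)) s =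
      maxBlockRank 𝕜 (kalmanCol D H (m + q)) s := by
    intro q
    induction q with
    | zero => exact hsat
    | succ q ih =>
      exact (maxBlockRank_kalmanCol_succ_succ_le D H hs hsL ih.le).antisymm
        (maxBlockRank_kalmanCol_le_succ D H hsL)
  induction q with
  | zero => rfl
  | succ q ih => rw [← add_assoc, hstep, ih]

end Kalman

lemma Matrix.rank_fromCols_of_range_le {𝕜 m n₁ n₂ : Type*} [Field 𝕜] [Fintype n₁] [Fintype n₂]
    {A : Matrix m n₁ 𝕜} {B : Matrix m n₂ 𝕜}
    (h : LinearMap.range A.mulVecLin ≤ LinearMap.range B.mulVecLin) :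
    (fromCols A B).rank = B.rank := by
  have hcols : (fromCols A B).col = Sum.elim A.col B.col := by
    funext j; cases j <;> rfl
  rw [Matrix.rank, Matrix.rank, range_mulVecLin, hcols, Set.Sum.elim_range, span_union,
    ← range_mulVecLin, ← range_mulVecLin, sup_eq_right.2 h]

section KalmanFamily

variable {N L s : ℕ} {D : Matrix (Fin N) (Fin N) ℝ} {H : Matrix (Fin N) (Fin L) ℝ} {m : ℕ}

lemma range_mulVecLin_kalmanMatrix (f : Fin m → Fin s → Fin L) :
    LinearMap.range (Matrix.of fun (i : Fin N) (p : Fin m × Fin s) =>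
        ((D ^ (m - 1 - (p.1 : ℕ))) * H) i (f p.1 p.2)).mulVecLin =
      blockSpan ℝ (kalmanCol D H m) (fun k => univ.image (f k)) := by
  rw [range_mulVecLin, blockSpan]
  congr 1
  ext v
  constructor
  · rintro ⟨⟨k, i⟩, rfl⟩
    exact ⟨(k, f k i), mem_image_of_mem _ (mem_univ i), rfl⟩
  · rintro ⟨⟨k, j⟩, hj, rfl⟩
    obtain ⟨i, -, rfl⟩ := mem_image.1 (show j ∈ univ.image (f k) from hj)
    exact ⟨(k, i), rfl⟩

lemma exists_mem_blockSelections_of_mem_kalmanFamily {M : Matrix (Fin N) (Fin m × Fin s) ℝ}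
    (hM : M ∈ KalmanFamily N L s D H m) :
    ∃ S ∈ blockSelections s, LinearMap.range M.mulVecLin = blockSpan ℝ (kalmanCol D H m) S := by
  obtain ⟨f, hf, rfl⟩ := hM
  refine ⟨fun k => univ.image (f k), mem_blockSelections.2 fun k => ?_,
    range_mulVecLin_kalmanMatrix f⟩
  rw [card_image_of_injective _ (hf k), card_univ, Fintype.card_fin]

lemma exists_mem_kalmanFamily_of_mem_blockSelections {S : Fin m → Finset (Fin L)}
    (hS : S ∈ blockSelections s) :
    ∃ M ∈ KalmanFamily N L s D H m,
      LinearMap.range M.mulVecLin = blockSpan ℝ (kalmanCol D H m) S := by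
  obtain ⟨f, hf, hfS⟩ : ∃ f : Fin m → Fin s → Fin L,
      (∀ k, Function.Injective (f k)) ∧ (fun k => univ.image (f k)) = S :=
    ⟨fun k => (S k).orderEmbOfFin (mem_blockSelections.1 hS k),
      fun k => ((S k).orderEmbOfFin _).injective, funext fun k => image_orderEmbOfFin_univ _ _⟩
  exact ⟨_, ⟨f, hf, rfl⟩, (range_mulVecLin_kalmanMatrix f).trans (congrArg _ hfS)⟩

lemma maxKalmanRank_eq_maxBlockRank :
    maxKalmanRank N L s D H m = maxBlockRank ℝ (kalmanCol D H m) s := by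
  refine le_antisymm (csSup_le' ?_) (Finset.sup_le fun S hS => ?_)
  · rintro _ ⟨M, hM, rfl⟩
    obtain ⟨S, hS, hMS⟩ := exists_mem_blockSelections_of_mem_kalmanFamily hM
    rw [Matrix.rank, hMS]
    exact finrank_le_maxBlockRank hS
  · obtain ⟨M, hM, hMS⟩ := exists_mem_kalmanFamily_of_mem_blockSelections (D := D) (H := H) hS
    have hbdd : BddAbove (Matrix.rank '' KalmanFamily N L s D H m) :=
      ⟨N, by rintro _ ⟨M, -, rfl⟩; exact M.rank_le_card_height.trans_eq (Fintype.card_fin N)⟩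
    rw [← hMS]
    exact le_csSup hbdd ⟨M, hM, rfl⟩

end KalmanFamily

theorem max_rank_saturates_general (N L s : ℕ) (hs : 0 < s) (hsL : s ≤ L)
    (D : Matrix (Fin N) (Fin N) ℝ) (H : Matrix (Fin N) (Fin L) ℝ)
    (K : ℕ) (hsat : maxKalmanRank N L s D H K = maxKalmanRank N L s D H (K + 1)) :
    (∀ Q : ℕ, 0 < Q → maxKalmanRank N L s D H (K + Q) = maxKalmanRank N L s D H K) ∧
    (∀ Mstar ∈ KalmanFamily N L s D H K, Mstar.rank = maxKalmanRank N L s D H K →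
      (Matrix.fromCols ((D ^ K) * H) Mstar).rank = Mstar.rank) := by
  have hsL' : s ≤ Fintype.card (Fin L) := (Fintype.card_fin L).symm ▸ hsL
  simp only [maxKalmanRank_eq_maxBlockRank] at hsat ⊢
  refine ⟨fun Q _ => maxBlockRank_kalmanCol_add D H hs hsL' hsat.symm Q, fun M hM hrank => ?_⟩
  obtain ⟨S, hS, hMS⟩ := exists_mem_blockSelections_of_mem_kalmanFamily hM
  refine rank_fromCols_of_range_le ?_
  rw [range_mulVecLin, hMS]
  exact span_range_col_le_blockSpan D H hs hsL' hsat.ge hS (by rwa [Matrix.rank, hMS] at hrank)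

/-- If `R*_K = R*_{K+1}` then `R*_{K+Q} = R*_K` for every positive `Q`; moreover every
maximum-rank `M* ∈ 𝓗_K` already contains the columns of `D^K H` in its column space,
i.e. `rank [D^K H | M*] = rank M*`. -/
theorem max_rank_saturates (N L s : ℕ) (hN : 0 < N) (hL : 0 < L) (hs : 0 < s) (hsL : s ≤ L)
    (D : Matrix (Fin N) (Fin N) ℝ) (H : Matrix (Fin N) (Fin L) ℝ)
    (K : ℕ) (hK : 0 < K)
    (hsat : maxKalmanRank N L s D H K = maxKalmanRank N L s D H (K + 1)) :
    (∀ Q : ℕ, 0 < Q → maxKalmanRank N L s D H (K + Q) = maxKalmanRank N L s D H K) ∧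
    (∀ Mstar ∈ KalmanFamily N L s D H K, Mstar.rank = maxKalmanRank N L s D H K →
      (Matrix.fromCols ((D ^ K) * H) Mstar).rank = Mstar.rank) :=
  max_rank_saturates_general N L s hs hsL D H K hsat
end
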